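/- arXiv:2002.06876 — 12 statements merged into one kernel-verified Lean document; each statement's English description precedes it below -/
import Mathlib

section
/- Let T1 with weight w1 and T2 with weight w2 be weighted trees whose weights are strictly positive. Then a bijection f : V(T1) → V(T2) is an isometry of the metric spaces (V(T1), d_{w1}) and (V(T2), d_{w2}) if and only if f is an isomorphism of the weighted trees T1(w1) and T2(w2). -/
open SimpleGraph

noncomputable section

variable {V : Type*}

/-- The degree of a vertex of a graph. -/
def vdeg (G : SimpleGraph V) (v : V) : ℕ := Nat.card (G.neighborSet v)

/- The out-degree of a vertex `v` of the tree `G` rooted at `r`: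
`δ⁺(v) = δ(v)` if `v = r` and `δ⁺(v) = δ(v) - 1` otherwise. -/
open Classical in
def outDeg (G : SimpleGraph V) (r v : V) : ℕ :=
  if v = r then vdeg G v else vdeg G v - 1

/-- `v` is a direct successor of `u` in the tree `G` rooted at `r`:
`u` and `v` are adjacent and `u` lies on the path joining `v` and `r`. -/
def DirectSucc (G : SimpleGraph V) (r u v : V) : Prop :=
  G.Adj u v ∧ ∃ p : G.Walk v r, p.IsPath ∧ u ∈ p.support

/-- A labeling `l` of the tree `G` rooted at `r` is monotone if `l⁻¹(0) = V₀⁺(T)`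
and `l v < l u` whenever `v` is a direct successor of `u`. -/
def MonotoneLabeling (G : SimpleGraph V) (r : V) (l : V → NNReal) : Prop :=
  (∀ v, l v = 0 ↔ outDeg G r v = 0) ∧
    ∀ u v, DirectSucc G r u v → l v < l u

/-- A weight `w` on the tree `G` rooted at `r` is equidistant if it is strictly positive
on the edges and there is a constant `K` such that for every `u ∈ V₀⁺(T)`, the sum of
the weights of the edges of the path joining `r` and `u` equals `K`. -/
def EquidistantWeight (G : SimpleGraph V) (r : V) (w : Sym2 V → NNReal) : Prop :=
  (∀ e ∈ G.edgeSet, 0 < w e) ∧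
    ∃ K : NNReal, ∀ u, outDeg G r u = 0 →
      ∀ p : G.Walk r u, p.IsPath → (p.edges.map w).sum = K

/-- `d` is a metric on the set `A`. -/
def IsMetricOn (d : V → V → NNReal) (A : Set V) : Prop :=
  (∀ x ∈ A, ∀ y ∈ A, (d x y = 0 ↔ x = y)) ∧
  (∀ x ∈ A, ∀ y ∈ A, d x y = d y x) ∧
  (∀ x ∈ A, ∀ y ∈ A, ∀ z ∈ A, d x y ≤ d x z + d z y)

/-- `d` is an ultrametric on the set `A`: a metric satisfying the strong triangle
inequality. -/
def IsUltrametricOn (d : V → V → NNReal) (A : Set V) : Prop :=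
  IsMetricOn d A ∧ ∀ x ∈ A, ∀ y ∈ A, ∀ z ∈ A, d x y ≤ max (d x z) (d z y)

/-!
In a tree with positive edge weights, `u` and `v` are adjacent exactly when no third vertex `z`
satisfies `d u z + d z v = d u v`. Hence adjacency, and with it every edge weight
`w s(u, v) = d u v`, is determined by the metric and preserved by isometries. Conversely an
isomorphism of weighted trees maps the path from `x` to `y` onto the path from `f x` to `f y`
with the same edge weights.
-/

def MetricAdj {α : Type*} (d : α → α → NNReal) (u v : α) : Prop :=
  u ≠ v ∧ ∀ z, d u z + d z v = d u v → z = u ∨ z = v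

theorem metricAdj_iff_of_isometry {α β : Type*} {d₁ : α → α → NNReal}
    {d₂ : β → β → NNReal} {f : α → β} (hf : Function.Bijective f)
    (hiso : ∀ x y, d₂ (f x) (f y) = d₁ x y) (u v : α) :
    MetricAdj d₂ (f u) (f v) ↔ MetricAdj d₁ u v := by
  simp only [MetricAdj, hf.1.ne_iff, hf.2.forall, hiso, hf.1.eq_iff]

namespace SimpleGraph

def IsPathMetric (G : SimpleGraph V) (w : Sym2 V → NNReal) (d : V → V → NNReal) : Prop :=
  ∀ u v, ∀ p : G.Walk u v, p.IsPath → d u v = (p.edges.map w).sum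

namespace IsPathMetric

variable {G : SimpleGraph V} {w : Sym2 V → NNReal} {d : V → V → NNReal} {u v z : V}

theorem apply_of_adj (hd : IsPathMetric G w d) (h : G.Adj u v) : d u v = w s(u, v) := by
  simpa using hd u v (Walk.cons h Walk.nil) (by simp [h.ne])

theorem eq_add_of_mem_support (hd : IsPathMetric G w d) {p : G.Walk u v} (hp : p.IsPath)
    (hz : z ∈ p.support) : d u v = d u z + d z v := by
  classical
  rw [hd u v p hp, hd u z _ (hp.takeUntil hz), hd z v _ (hp.dropUntil hz), ← List.sum_append,
    ← List.map_append, ← Walk.edges_append, p.take_spec hz]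

theorem pos_of_ne (hG : G.Preconnected) (hw : ∀ e ∈ G.edgeSet, 0 < w e)
    (hd : IsPathMetric G w d) (huv : u ≠ v) : 0 < d u v := by
  obtain ⟨p, hp⟩ := hG.exists_isPath u v
  rw [hd u v p hp]
  refine List.sum_pos _ (by simpa using fun e he ↦ hw e (p.edges_subset_edgeSet he)) ?_
  simpa [Walk.edges_eq_nil] using Walk.not_nil_of_ne huv

theorem eq_of_eq_zero (hG : G.Preconnected) (hw : ∀ e ∈ G.edgeSet, 0 < w e)
    (hd : IsPathMetric G w d) (h : d u v = 0) : u = v := by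
  by_contra huv
  exact (hd.pos_of_ne hG hw huv).ne' h

/-- Take a path from `u` to `z`: if it passes through `v`, then `v` lies between `u` and `z`;
otherwise extending it by the edge `uv` puts `u` between `z` and `v`. Either way a point strictly
between `u` and `v` would force a zero distance. -/
theorem metricAdj_of_adj (hG : G.Preconnected) (hw : ∀ e ∈ G.edgeSet, 0 < w e)
    (hd : IsPathMetric G w d) (h : G.Adj u v) : MetricAdj d u v := by
  refine ⟨h.ne, fun z hz ↦ ?_⟩
  obtain ⟨p, hp⟩ := hG.exists_isPath u z
  by_cases hv : v ∈ p.support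
  · rw [hd.eq_add_of_mem_support hp hv, add_assoc, add_eq_left, add_eq_zero] at hz
    exact Or.inr (hd.eq_of_eq_zero hG hw hz.1).symm
  · have hq : (p.reverse.concat h).IsPath := hp.reverse.concat (by simpa using hv) h
    rw [hd.eq_add_of_mem_support (z := u) hq (by simp), ← add_assoc, add_eq_right,
      add_eq_zero] at hz
    exact Or.inl (hd.eq_of_eq_zero hG hw hz.1).symm

theorem adj_of_metricAdj (hG : G.Preconnected) (hd : IsPathMetric G w d)
    (h : MetricAdj d u v) : G.Adj u v := by
  obtain ⟨p, hp⟩ := hG.exists_isPath u v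
  cases p with
  | nil => exact absurd rfl h.1
  | @cons _ b _ hub q =>
    rcases h.2 b (hd.eq_add_of_mem_support hp (by simp)).symm with rfl | rfl
    · exact (hub.ne rfl).elim
    · exact hub

theorem adj_iff_metricAdj (hG : G.Preconnected) (hw : ∀ e ∈ G.edgeSet, 0 < w e)
    (hd : IsPathMetric G w d) : G.Adj u v ↔ MetricAdj d u v :=
  ⟨hd.metricAdj_of_adj hG hw, hd.adj_of_metricAdj hG⟩

theorem apply_map {V' : Type*} {G' : SimpleGraph V'} {w' : Sym2 V' → NNReal}
    {d' : V' → V' → NNReal} (hG : G.Preconnected) (hd : IsPathMetric G w d)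
    (hd' : IsPathMetric G' w' d') (φ : G →g G') (hφ : Function.Injective φ)
    (hw : ∀ u v, G.Adj u v → w' s(φ u, φ v) = w s(u, v)) (x y : V) :
    d' (φ x) (φ y) = d x y := by
  obtain ⟨p, hp⟩ := hG.exists_isPath x y
  rw [hd x y p hp, hd' _ _ (p.map φ) (hp.map hφ), Walk.edges_map, List.map_map]
  refine congrArg List.sum (List.map_congr_left fun e he ↦ ?_)
  induction e using Sym2.ind with
  | _ a b => exact hw a b (p.edges_subset_edgeSet he)

end IsPathMetric

end SimpleGraph

theorem stmt0_isometry_iff_isomorphism_of_weighted_trees_general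
    {V1 V2 : Type*}
    (G1 : SimpleGraph V1) (G2 : SimpleGraph V2)
    (hG1 : G1.IsTree) (hG2 : G2.IsTree)
    (w1 : Sym2 V1 → NNReal) (w2 : Sym2 V2 → NNReal)
    (hw1 : ∀ e ∈ G1.edgeSet, 0 < w1 e) (hw2 : ∀ e ∈ G2.edgeSet, 0 < w2 e)
    (d1 : V1 → V1 → NNReal) (d2 : V2 → V2 → NNReal)
    (hd1 : ∀ u v, ∀ p : G1.Walk u v, p.IsPath → d1 u v = (p.edges.map w1).sum)
    (hd2 : ∀ u v, ∀ p : G2.Walk u v, p.IsPath → d2 u v = (p.edges.map w2).sum)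
    (f : V1 → V2) (hf : Function.Bijective f) :
    (∀ x y, d2 (f x) (f y) = d1 x y) ↔
      ((∀ u v, G1.Adj u v ↔ G2.Adj (f u) (f v)) ∧
        ∀ u v, G1.Adj u v → w2 s(f u, f v) = w1 s(u, v)) := by
  have hC1 := hG1.connected.preconnected
  have hC2 := hG2.connected.preconnected
  constructor
  · intro hiso
    have hadj : ∀ u v, G1.Adj u v ↔ G2.Adj (f u) (f v) := fun u v ↦ by
      rw [IsPathMetric.adj_iff_metricAdj hC1 hw1 hd1, IsPathMetric.adj_iff_metricAdj hC2 hw2 hd2,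
        metricAdj_iff_of_isometry hf hiso]
    refine ⟨hadj, fun u v huv ↦ ?_⟩
    rw [← IsPathMetric.apply_of_adj hd2 ((hadj u v).1 huv), hiso,
      IsPathMetric.apply_of_adj hd1 huv]
  · rintro ⟨hadj, hw⟩
    exact IsPathMetric.apply_map hC1 hd1 hd2 ⟨f, (hadj _ _).1⟩ hf.1 hw

/-- For weighted trees `T₁(w₁)`, `T₂(w₂)` with strictly positive weights,
a bijection `f : V(T₁) → V(T₂)` is an isometry of `(V(T₁), d_{w₁})` and `(V(T₂), d_{w₂})`
if and only if it is an isomorphism of the weighted trees. -/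
theorem stmt0_isometry_iff_isomorphism_of_weighted_trees
    {V1 V2 : Type*} [Fintype V1] [Fintype V2]
    (G1 : SimpleGraph V1) (G2 : SimpleGraph V2)
    (hG1 : G1.IsTree) (hG2 : G2.IsTree)
    (w1 : Sym2 V1 → NNReal) (w2 : Sym2 V2 → NNReal)
    (hw1 : ∀ e ∈ G1.edgeSet, 0 < w1 e) (hw2 : ∀ e ∈ G2.edgeSet, 0 < w2 e)
    (d1 : V1 → V1 → NNReal) (d2 : V2 → V2 → NNReal)
    (hd1 : ∀ u v, ∀ p : G1.Walk u v, p.IsPath → d1 u v = (p.edges.map w1).sum)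
    (hd2 : ∀ u v, ∀ p : G2.Walk u v, p.IsPath → d2 u v = (p.edges.map w2).sum)
    (f : V1 → V2) (hf : Function.Bijective f) :
    (∀ x y, d2 (f x) (f y) = d1 x y) ↔
      ((∀ u v, G1.Adj u v ↔ G2.Adj (f u) (f v)) ∧
        ∀ u v, G1.Adj u v → w2 s(f u, f v) = w1 s(u, v)) :=
  stmt0_isometry_iff_isomorphism_of_weighted_trees_general G1 G2 hG1 hG2 w1 w2 hw1 hw2 d1 d2 hd1 hd2
    f hf
end
end

section
/- Let (X, d) be a finite metric space and let T1 with weight w1 and T2 with weight w2 be weighted trees with strictly positive weights such that X = V(T1) = V(T2). If d = d_{w1} = d_{w2}, then T1 = T2 as graphs and w1 = w2, i.e. the two weighted trees coincide. -/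
open SimpleGraph

noncomputable section

variable {V : Type*}

/-
In a tree with positive edge weights, `z` lies on the path from `u` to `v` exactly when
`d u z + d z v = d u v`: a detour through a vertex off the path uses an edge that the path
does not, and that edge has positive weight. Hence adjacency (`u ≠ v` with no third vertex
between them) is determined by `d`, and the weight of an edge `uv` is `d u v`.
-/

theorem List.Subperm.sum_map_le_sum_map {α M : Type*} [AddCommMonoid M] [Preorder M]
    [AddLeftMono M] (f : α → M) {l₁ l₂ : List α} (h : l₁.Subperm l₂)
    (h₀ : ∀ a ∈ l₂, 0 ≤ f a) : (l₁.map f).sum ≤ (l₂.map f).sum := by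
  obtain ⟨l, hperm, hsub⟩ := h
  exact (hperm.map f).sum_eq ▸ (hsub.map f).sum_le_sum (List.forall_mem_map.2 h₀)

namespace SimpleGraph

variable {G : SimpleGraph V}

/-- `d` is the additive metric `d_w` of `(G, w)`. -/
def IsAdditiveMetric (G : SimpleGraph V) (w : Sym2 V → NNReal) (d : V → V → NNReal) : Prop :=
  ∀ u v, ∀ p : G.Walk u v, p.IsPath → d u v = (p.edges.map w).sum

theorem IsAcyclic.edges_subset_of_isPath (hG : G.IsAcyclic) {u v : V} {p : G.Walk u v}
    (hp : p.IsPath) (q : G.Walk u v) : p.edges ⊆ q.edges := by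
  classical
  have : p = q.bypass :=
    congrArg Subtype.val ((hG.subsingleton_path u v).elim ⟨p, hp⟩ ⟨_, q.bypass_isPath⟩)
  exact this ▸ q.edges_bypass_subset_edges

namespace IsAdditiveMetric

variable {w : Sym2 V → NNReal} {d : V → V → NNReal}

theorem weight_eq_dist (hd : IsAdditiveMetric G w d) {u v : V} (h : G.Adj u v) :
    w s(u, v) = d u v := by
  simpa [h.edges_toWalk] using (hd u v h.toWalk h.isPath_toWalk).symm

theorem dist_add_dist_of_mem_support (hd : IsAdditiveMetric G w d) {u v z : V}
    {p : G.Walk u v} (hp : p.IsPath) (hz : z ∈ p.support) : d u z + d z v = d u v := by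
  classical
  rw [hd u z _ (hp.takeUntil hz), hd z v _ (hp.dropUntil hz), hd u v p hp]
  conv_rhs => rw [← p.take_spec hz]
  rw [Walk.edges_append, List.map_append, List.sum_append]

theorem mem_support_of_dist_add_dist (hd : IsAdditiveMetric G w d) (hG : G.IsTree)
    (hw : ∀ e ∈ G.edgeSet, 0 < w e)
    {u v z : V} {p : G.Walk u v} (hp : p.IsPath) (h : d u z + d z v = d u v) :
    z ∈ p.support := by
  by_contra hz
  obtain ⟨q, hq, -⟩ := hG.existsUnique_path u z
  obtain ⟨r, hr, -⟩ := hG.existsUnique_path z v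
  obtain ⟨b, hzb, r', rfl⟩ := r.exists_eq_cons_of_ne fun hzv => hz (by simp [hzv])
  have he : s(z, b) ∉ p.edges := fun he => hz (p.fst_mem_support_of_mem_edges he)
  have hsub : (s(z, b) :: p.edges).Subperm (q.append (r'.cons hzb)).edges := by
    refine List.subperm_of_subset (List.nodup_cons.2 ⟨he, hp.edges_nodup⟩) ?_
    rintro e (_ | ⟨_, he'⟩)
    · simp
    · exact hG.isAcyclic.edges_subset_of_isPath hp _ he'
  have hle := hsub.sum_map_le_sum_map w fun _ _ => zero_le
  -- this turns `hle` into `w s(z, b) + d u v ≤ d u v`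
  rw [List.map_cons, List.sum_cons, Walk.edges_append, List.map_append, List.sum_append,
    ← hd u z q hq, ← hd z v _ hr, h, ← hd u v p hp] at hle
  exact (hw _ hzb).ne' (le_antisymm (add_le_iff_nonpos_left.1 hle) zero_le)

theorem dist_add_dist_eq_iff_mem_support (hd : IsAdditiveMetric G w d) (hG : G.IsTree)
    (hw : ∀ e ∈ G.edgeSet, 0 < w e) {u v z : V} {p : G.Walk u v} (hp : p.IsPath) :
    d u z + d z v = d u v ↔ z ∈ p.support :=
  ⟨hd.mem_support_of_dist_add_dist hG hw hp, hd.dist_add_dist_of_mem_support hp⟩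

theorem adj_iff (hd : IsAdditiveMetric G w d) (hG : G.IsTree) (hw : ∀ e ∈ G.edgeSet, 0 < w e)
    (u v : V) :
    G.Adj u v ↔ u ≠ v ∧ ∀ z, d u z + d z v = d u v → z = u ∨ z = v := by
  constructor
  · intro h
    refine ⟨h.ne, fun z hz => ?_⟩
    have hz' := (hd.dist_add_dist_eq_iff_mem_support hG hw h.isPath_toWalk).1 hz
    simpa [h.support_toWalk] using hz'
  · rintro ⟨huv, hbetween⟩
    obtain ⟨p, hp, -⟩ := hG.existsUnique_path u v
    obtain ⟨b, hub, q, rfl⟩ := p.exists_eq_cons_of_ne huv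
    have hb := (hd.dist_add_dist_eq_iff_mem_support (z := b) hG hw hp).2 (by simp)
    exact (hbetween b hb).resolve_left hub.ne' ▸ hub

end IsAdditiveMetric

end SimpleGraph

theorem stmt1_weighted_trees_coincide_of_same_metric_general
    {V : Type*}
    (G1 G2 : SimpleGraph V) (hG1 : G1.IsTree) (hG2 : G2.IsTree)
    (w1 w2 : Sym2 V → NNReal)
    (hw1 : ∀ e ∈ G1.edgeSet, 0 < w1 e) (hw2 : ∀ e ∈ G2.edgeSet, 0 < w2 e)
    (d : V → V → NNReal)
    (hd1 : ∀ u v, ∀ p : G1.Walk u v, p.IsPath → d u v = (p.edges.map w1).sum)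
    (hd2 : ∀ u v, ∀ p : G2.Walk u v, p.IsPath → d u v = (p.edges.map w2).sum) :
    G1 = G2 ∧ ∀ e ∈ G1.edgeSet, w1 e = w2 e := by
  have hG : G1 = G2 := by
    ext u v
    rw [IsAdditiveMetric.adj_iff hd1 hG1 hw1, IsAdditiveMetric.adj_iff hd2 hG2 hw2]
  refine ⟨hG, fun e he => ?_⟩
  induction e using Sym2.ind with
  | h u v =>
    have he' : G2.Adj u v := hG ▸ he
    rw [IsAdditiveMetric.weight_eq_dist hd1 he, IsAdditiveMetric.weight_eq_dist hd2 he']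

/-- If two weighted trees with strictly positive weights on the same vertex
set `X` generate the same additive metric `d`, then the two weighted trees coincide:
the trees are equal as graphs and the weights agree on the edges. -/
theorem stmt1_weighted_trees_coincide_of_same_metric
    {V : Type*} [Fintype V]
    (G1 G2 : SimpleGraph V) (hG1 : G1.IsTree) (hG2 : G2.IsTree)
    (w1 w2 : Sym2 V → NNReal)
    (hw1 : ∀ e ∈ G1.edgeSet, 0 < w1 e) (hw2 : ∀ e ∈ G2.edgeSet, 0 < w2 e)
    (d : V → V → NNReal)
    (hd1 : ∀ u v, ∀ p : G1.Walk u v, p.IsPath → d u v = (p.edges.map w1).sum)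
    (hd2 : ∀ u v, ∀ p : G2.Walk u v, p.IsPath → d u v = (p.edges.map w2).sum) :
    G1 = G2 ∧ ∀ e ∈ G1.edgeSet, w1 e = w2 e :=
  stmt1_weighted_trees_coincide_of_same_metric_general G1 G2 hG1 hG2 w1 w2 hw1 hw2 d hd1 hd2
end
end

section
/- Let T1 with weight w1 and T2 with weight w2 be weighted trees whose weights are strictly positive. Then the weighted trees T1(w1) and T2(w2) are isomorphic if and only if the metric spaces (V(T1), d_{w1}) and (V(T2), d_{w2}) are isometric. -/
open SimpleGraph

noncomputable section

variable {V : Type*}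

/- With positive weights, a vertex `z` satisfies `d u z + d z v = d u v` exactly when it lies on
the path joining `u` and `v` in the tree, and that path has an interior vertex iff `u` and `v` are
not adjacent. So adjacency is determined by the metric, an isometry maps edges to edges, and the
weight of an edge is the distance between its ends. -/

/-- `d` is the additive metric `d_w` of the weighted tree `G(w)`. -/
def IsWeightedPathDist {W : Type*} (G : SimpleGraph W) (w : Sym2 W → NNReal)
    (d : W → W → NNReal) : Prop :=
  ∀ u v, ∀ p : G.Walk u v, p.IsPath → d u v = (p.edges.map w).sum

namespace IsWeightedPathDist

variable {W : Type*} {G : SimpleGraph W} {w : Sym2 W → NNReal} {d : W → W → NNReal}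

lemma symm (hd : IsWeightedPathDist G w d) (hc : G.Connected) (u v : W) :
    d u v = d v u := by
  obtain ⟨p, hp⟩ := hc.preconnected.exists_isPath u v
  rw [hd u v p hp, hd v u p.reverse hp.reverse, Walk.edges_reverse, List.map_reverse,
    List.sum_reverse]

lemma pos (hd : IsWeightedPathDist G w d) (hc : G.Connected) (hw : ∀ e ∈ G.edgeSet, 0 < w e)
    {u v : W} (huv : u ≠ v) : 0 < d u v := by
  obtain ⟨p, hp⟩ := hc.preconnected.exists_isPath u v
  obtain ⟨e, he⟩ : ∃ e, e ∈ p.edges := List.exists_mem_of_ne_nil _ fun h ↦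
    huv (Walk.eq_of_length_eq_zero (by rw [← Walk.length_edges, h, List.length_nil]))
  rw [hd u v p hp]
  exact (hw e (p.edges_subset_edgeSet he)).trans_le
    (List.single_le_sum (fun _ _ ↦ zero_le) _ (List.mem_map_of_mem he))

lemma eq_of_adj (hd : IsWeightedPathDist G w d) {u v : W} (h : G.Adj u v) :
    d u v = w s(u, v) := by
  rw [hd u v h.toWalk h.isPath_toWalk]
  simp

lemma add_eq_of_mem_support [DecidableEq W] (hd : IsWeightedPathDist G w d) {u v z : W}
    {p : G.Walk u v} (hp : p.IsPath) (hz : z ∈ p.support) :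
    d u z + d z v = d u v := by
  rw [hd _ _ _ (hp.takeUntil hz), hd _ _ _ (hp.dropUntil hz), hd u v p hp,
    ← List.sum_append, ← List.map_append, ← Walk.edges_append, p.take_spec hz]

lemma add_eq_or_add_eq_of_adj (hd : IsWeightedPathDist G w d) (hc : G.Connected)
    {u v : W} (h : G.Adj u v) (z : W) :
    d u v + d v z = d u z ∨ d v u + d u z = d v z := by
  classical
  obtain ⟨p, hp⟩ := hc.preconnected.exists_isPath u z
  by_cases hv : v ∈ p.support
  · exact .inl (hd.add_eq_of_mem_support hp hv)
  · exact .inr (hd.add_eq_of_mem_support (hp.cons (h := h.symm) hv)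
      (List.mem_cons_of_mem _ p.start_mem_support))

lemma adj_iff (hd : IsWeightedPathDist G w d) (hc : G.Connected)
    (hw : ∀ e ∈ G.edgeSet, 0 < w e) {u v : W} :
    G.Adj u v ↔ u ≠ v ∧ ∀ z, d u z + d z v = d u v → z = u ∨ z = v := by
  classical
  constructor
  · refine fun h ↦ ⟨h.ne, fun z hz ↦ ?_⟩
    by_contra! hzuv
    rcases hd.add_eq_or_add_eq_of_adj hc h z with h' | h'
    · have : d u v + (d v z + d z v) = d u v := by rw [← add_assoc, h', hz]
      exact (lt_add_of_pos_right _ (add_pos (hd.pos hc hw (Ne.symm hzuv.2))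
        (hd.pos hc hw hzuv.2))).ne' this
    · have : d u v + (d u z + d u z) = d u v := by
        calc d u v + (d u z + d u z) = d u z + (d v u + d u z) := by rw [hd.symm hc v u]; ring
          _ = d u z + d z v := by rw [h', hd.symm hc z v]
          _ = d u v := hz
      have huz := hd.pos hc hw (Ne.symm hzuv.1)
      exact (lt_add_of_pos_right _ (add_pos huz huz)).ne' this
  · rintro ⟨huv, hbetween⟩
    obtain ⟨p, hp⟩ := hc.preconnected.exists_isPath u v
    cases p with
    | nil => exact absurd rfl huv
    | @cons _ b _ hub q =>
      have hb := hbetween b (hd.add_eq_of_mem_support hp (by simp))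
      rcases hb with hbu | rfl
      · exact absurd hbu hub.ne'
      · exact hub

lemma map_eq {W' : Type*} {G' : SimpleGraph W'} {w' : Sym2 W' → NNReal} {d' : W' → W' → NNReal}
    (hd : IsWeightedPathDist G w d) (hd' : IsWeightedPathDist G' w' d') (hc : G.Connected)
    (φ : G ↪g G') (hφ : ∀ u v, G.Adj u v → w' s(φ u, φ v) = w s(u, v)) (x y : W) :
    d' (φ x) (φ y) = d x y := by
  obtain ⟨p, hp⟩ := hc.preconnected.exists_isPath x y
  refine (hd' _ _ (p.map φ.toHom) (hp.map φ.injective)).trans ?_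
  rw [hd x y p hp, Walk.edges_map, List.map_map]
  congr 1
  refine List.map_congr_left fun e he ↦ ?_
  induction e using Sym2.ind with
  | h a b => exact hφ a b (p.edges_subset_edgeSet he)

lemma adj_iff_adj_of_isometry {W' : Type*} {G' : SimpleGraph W'} {w' : Sym2 W' → NNReal}
    {d' : W' → W' → NNReal} (hd : IsWeightedPathDist G w d) (hd' : IsWeightedPathDist G' w' d')
    (hc : G.Connected) (hc' : G'.Connected) (hw : ∀ e ∈ G.edgeSet, 0 < w e)
    (hw' : ∀ e ∈ G'.edgeSet, 0 < w' e) (f : W ≃ W') (hf : ∀ x y, d' (f x) (f y) = d x y)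
    (u v : W) : G.Adj u v ↔ G'.Adj (f u) (f v) := by
  rw [hd.adj_iff hc hw, hd'.adj_iff hc' hw', ← f.forall_congr_right]
  simp only [hf, f.apply_eq_iff_eq, ne_eq]

end IsWeightedPathDist

theorem stmt2_weighted_trees_isomorphic_iff_isometric_general
    {V1 V2 : Type*}
    (G1 : SimpleGraph V1) (G2 : SimpleGraph V2)
    (hG1 : G1.IsTree) (hG2 : G2.IsTree)
    (w1 : Sym2 V1 → NNReal) (w2 : Sym2 V2 → NNReal)
    (hw1 : ∀ e ∈ G1.edgeSet, 0 < w1 e) (hw2 : ∀ e ∈ G2.edgeSet, 0 < w2 e)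
    (d1 : V1 → V1 → NNReal) (d2 : V2 → V2 → NNReal)
    (hd1 : ∀ u v, ∀ p : G1.Walk u v, p.IsPath → d1 u v = (p.edges.map w1).sum)
    (hd2 : ∀ u v, ∀ p : G2.Walk u v, p.IsPath → d2 u v = (p.edges.map w2).sum) :
    (∃ f : V1 ≃ V2, (∀ u v, G1.Adj u v ↔ G2.Adj (f u) (f v)) ∧
        ∀ u v, G1.Adj u v → w2 s(f u, f v) = w1 s(u, v)) ↔
      (∃ f : V1 ≃ V2, ∀ x y, d2 (f x) (f y) = d1 x y) := by
  have hd1' : IsWeightedPathDist G1 w1 d1 := hd1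
  have hd2' : IsWeightedPathDist G2 w2 d2 := hd2
  constructor
  · rintro ⟨f, hadj, hw⟩
    let φ : G1 ≃g G2 := ⟨f, (hadj _ _).symm⟩
    exact ⟨f, hd1'.map_eq hd2' hG1.connected φ.toEmbedding hw⟩
  · rintro ⟨f, hf⟩
    have hadj := hd1'.adj_iff_adj_of_isometry hd2' hG1.connected hG2.connected hw1 hw2 f hf
    refine ⟨f, hadj, fun u v h ↦ ?_⟩
    rw [← hd2'.eq_of_adj ((hadj u v).1 h), hf, hd1'.eq_of_adj h]

/-- Weighted trees `T₁(w₁)` and `T₂(w₂)` with strictly positive weights are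
isomorphic if and only if the metric spaces `(V(T₁), d_{w₁})` and `(V(T₂), d_{w₂})` are
isometric. -/
theorem stmt2_weighted_trees_isomorphic_iff_isometric
    {V1 V2 : Type*} [Fintype V1] [Fintype V2]
    (G1 : SimpleGraph V1) (G2 : SimpleGraph V2)
    (hG1 : G1.IsTree) (hG2 : G2.IsTree)
    (w1 : Sym2 V1 → NNReal) (w2 : Sym2 V2 → NNReal)
    (hw1 : ∀ e ∈ G1.edgeSet, 0 < w1 e) (hw2 : ∀ e ∈ G2.edgeSet, 0 < w2 e)
    (d1 : V1 → V1 → NNReal) (d2 : V2 → V2 → NNReal)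
    (hd1 : ∀ u v, ∀ p : G1.Walk u v, p.IsPath → d1 u v = (p.edges.map w1).sum)
    (hd2 : ∀ u v, ∀ p : G2.Walk u v, p.IsPath → d2 u v = (p.edges.map w2).sum) :
    (∃ f : V1 ≃ V2, (∀ u v, G1.Adj u v ↔ G2.Adj (f u) (f v)) ∧
        ∀ u v, G1.Adj u v → w2 s(f u, f v) = w1 s(u, v)) ↔
      (∃ f : V1 ≃ V2, ∀ x y, d2 (f x) (f y) = d1 x y) :=
  stmt2_weighted_trees_isomorphic_iff_isometric_general G1 G2 hG1 hG2 w1 w2 hw1 hw2 d1 d2 hd1 hd2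
end
end

section
/- Let T be a tree with labeling l : V(T) → ℝ≥0 and let d_l be defined by d_l(u,u) = 0 and d_l(u,v) = max_{v* ∈ V(P)} l(v*) for u ≠ v, where P is the unique path joining u and v in T. Then the following are equivalent: (1) d_l is an ultrametric on V(T); (2) d_l is a metric on V(T); (3) max{l(u), l(v)} > 0 holds for every edge {u,v} ∈ E(T). -/
/-!
On a connected graph, `d u v` is the largest label on any path from `u` to `v`, and it is also
bounded by the largest label on any walk from `u` to `v`, since a walk contains a path with
the same endpoints. Concatenating paths `x → z → y` therefore gives the strong triangle
inequality, and reversing a path gives symmetry, whatever the labels are. Hence `d` is an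
ultrametric as soon as it separates points, i.e. as soon as no path between distinct vertices
carries only zero labels; every such path starts with an edge, so positivity on edges suffices.
Conversely, along an edge `d u v = max (l u) (l v)`, which must be positive for a metric.
-/

open SimpleGraph

noncomputable section

variable {V : Type*}

namespace SimpleGraph

variable {G : SimpleGraph V} {l : V → NNReal} {d : V → V → NNReal} {u v : V}

def IsPathMaxLabelDist (G : SimpleGraph V) (l : V → NNReal) (d : V → V → NNReal) : Prop :=
  ∀ u v, u ≠ v → ∀ p : G.Walk u v, p.IsPath → d u v = (p.support.map l).foldr max 0

namespace IsPathMaxLabelDist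

theorem label_le (hd : G.IsPathMaxLabelDist l d) (huv : u ≠ v) {p : G.Walk u v}
    (hp : p.IsPath) {a : V} (ha : a ∈ p.support) : l a ≤ d u v := by
  rw [hd u v huv p hp]
  exact List.le_max_of_le' 0 (List.mem_map_of_mem ha) le_rfl

theorem le_of_walk (hd : G.IsPathMaxLabelDist l d) (huv : u ≠ v) (w : G.Walk u v)
    {c : NNReal} (hc : ∀ a ∈ w.support, l a ≤ c) : d u v ≤ c := by
  classical
  rw [hd u v huv _ w.toPath.2]
  refine List.max_le_of_forall_le _ _ ?_
  simpa using fun a ha => hc a (w.support_toPath_subset_support ha)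

theorem eq_max_of_adj (hd : G.IsPathMaxLabelDist l d) (h : G.Adj u v) :
    d u v = max (l u) (l v) := by
  rw [hd u v h.ne (.cons h .nil) (by simp [h.ne])]
  simp

theorem le_symm (hd : G.IsPathMaxLabelDist l d) (hconn : G.Preconnected) (huv : u ≠ v) :
    d v u ≤ d u v :=
  let ⟨p, hp⟩ := hconn.exists_isPath u v
  hd.le_of_walk huv.symm p.reverse fun _ ha => hd.label_le huv hp (by simpa using ha)

theorem symm (hd : G.IsPathMaxLabelDist l d) (hconn : G.Preconnected) (u v : V) :
    d u v = d v u := by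
  rcases eq_or_ne u v with rfl | huv
  · rfl
  · exact le_antisymm (hd.le_symm hconn huv.symm) (hd.le_symm hconn huv)

theorem le_max (hd : G.IsPathMaxLabelDist l d) (hconn : G.Preconnected)
    (hd0 : ∀ u, d u u = 0) (x y z : V) : d x y ≤ max (d x z) (d z y) := by
  rcases eq_or_ne x y with rfl | hxy
  · simp [hd0]
  rcases eq_or_ne x z with rfl | hxz
  · simp [hd0]
  rcases eq_or_ne z y with rfl | hzy
  · simp [hd0]
  obtain ⟨p, hp⟩ := hconn.exists_isPath x z
  obtain ⟨q, hq⟩ := hconn.exists_isPath z y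
  refine hd.le_of_walk hxy (p.append q) fun a ha => ?_
  rcases (Walk.mem_support_append_iff p q).mp ha with ha | ha
  · exact le_max_of_le_left (hd.label_le hxz hp ha)
  · exact le_max_of_le_right (hd.label_le hzy hq ha)

theorem pos (hd : G.IsPathMaxLabelDist l d) (hconn : G.Preconnected)
    (hedge : ∀ u v, G.Adj u v → 0 < max (l u) (l v)) (huv : u ≠ v) : 0 < d u v := by
  obtain ⟨p, hp⟩ := hconn.exists_isPath u v
  cases p with
  | nil => exact absurd rfl huv
  | @cons _ w _ hadj q =>
    have hw : w ∈ (Walk.cons hadj q).support := by simp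
    rcases lt_max_iff.mp (hedge _ _ hadj) with h | h
    · exact h.trans_le (hd.label_le huv hp (Walk.start_mem_support _))
    · exact h.trans_le (hd.label_le huv hp hw)

theorem eq_zero_iff (hd : G.IsPathMaxLabelDist l d) (hconn : G.Preconnected)
    (hd0 : ∀ u, d u u = 0) (hedge : ∀ u v, G.Adj u v → 0 < max (l u) (l v)) :
    d u v = 0 ↔ u = v :=
  ⟨fun h => by_contra fun huv => (hd.pos hconn hedge huv).ne' h, fun h => h ▸ hd0 u⟩

end IsPathMaxLabelDist

end SimpleGraph

theorem isUltrametricOn_univ_of_le_max {d : V → V → NNReal}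
    (hzero : ∀ x y, d x y = 0 ↔ x = y) (hsymm : ∀ x y, d x y = d y x)
    (hmax : ∀ x y z, d x y ≤ max (d x z) (d z y)) : IsUltrametricOn d Set.univ :=
  ⟨⟨fun x _ y _ => hzero x y, fun x _ y _ => hsymm x y,
    fun x _ y _ z _ => (hmax x y z).trans (max_le le_self_add le_add_self)⟩,
    fun x _ y _ z _ => hmax x y z⟩

theorem stmt4_dl_ultrametric_iff_metric_iff_pos_on_edges_general
    {V : Type*} (G : SimpleGraph V) (hG : G.IsTree)
    (l : V → NNReal) (d : V → V → NNReal)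
    (hd0 : ∀ u, d u u = 0)
    (hd : ∀ u v, u ≠ v → ∀ p : G.Walk u v, p.IsPath →
      d u v = (p.support.map l).foldr max 0) :
    (IsUltrametricOn d Set.univ ↔ IsMetricOn d Set.univ) ∧
    (IsMetricOn d Set.univ ↔ ∀ u v, G.Adj u v → 0 < max (l u) (l v)) := by
  have hd : G.IsPathMaxLabelDist l d := hd
  have hconn := hG.connected.preconnected
  have ultrametric_of_pos : (∀ u v, G.Adj u v → 0 < max (l u) (l v)) →
      IsUltrametricOn d Set.univ := fun hedge =>
    isUltrametricOn_univ_of_le_max (fun _ _ => hd.eq_zero_iff hconn hd0 hedge)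
      (hd.symm hconn) (hd.le_max hconn hd0)
  have pos_of_metric : IsMetricOn d Set.univ → ∀ u v, G.Adj u v → 0 < max (l u) (l v) :=
    fun hm u v huv => by
      rw [← hd.eq_max_of_adj huv, pos_iff_ne_zero]
      exact fun h => huv.ne ((hm.1 u trivial v trivial).mp h)
  exact ⟨⟨And.left, fun hm => ultrametric_of_pos (pos_of_metric hm)⟩,
    ⟨pos_of_metric, fun hedge => (ultrametric_of_pos hedge).1⟩⟩

/-- For a labeled tree `T(l)` and `d_l` defined via maxima of labels along
the unique paths, the following are equivalent: (1) `d_l` is an ultrametric;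
(2) `d_l` is a metric; (3) `max {l u, l v} > 0` for every edge `{u, v}`. -/
theorem stmt4_dl_ultrametric_iff_metric_iff_pos_on_edges
    {V : Type*} [Fintype V] (G : SimpleGraph V) (hG : G.IsTree)
    (l : V → NNReal) (d : V → V → NNReal)
    (hd0 : ∀ u, d u u = 0)
    (hd : ∀ u v, u ≠ v → ∀ p : G.Walk u v, p.IsPath →
      d u v = (p.support.map l).foldr max 0) :
    (IsUltrametricOn d Set.univ ↔ IsMetricOn d Set.univ) ∧
    (IsMetricOn d Set.univ ↔ ∀ u v, G.Adj u v → 0 < max (l u) (l v)) :=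
  stmt4_dl_ultrametric_iff_metric_iff_pos_on_edges_general G hG l d hd0 hd
end
end

section
/- For every connected finite graph G with a labeling l : V(G) → ℝ≥0 there is a spanning tree T of G such that the function d_l built from the restriction of l to V(T) (using unique paths in T) equals ρ_l on V(G) × V(G), i.e. ρ_l(u,v) = d_l(u,v) for all u, v ∈ V(G). -/
/-!
Weight each edge `ab` of `G` by `1 + max (l a) (l b)` and let `T` be a connected spanning
subgraph of minimum total weight; since all weights are positive, `T` is a tree. Deleting an edge
`e` of the `T`-path from `u` to `v` splits `T` into two components separating `u` from `v`, so every
`G`-path from `u` to `v` has an edge `f` crossing the cut, and exchanging `e` for `f` shows that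
`e` weighs at most `f`. Hence no vertex of the `T`-path has a label above `ρ u v`.
-/

open SimpleGraph

noncomputable section

variable {V : Type*}

theorem Sym2.sup_map_le_iff {α β : Type*} [SemilatticeSup β] {f : α → β} {e : Sym2 α}
    {c : β} :
    (e.map f).sup ≤ c ↔ ∀ x ∈ e, f x ≤ c := by
  induction e with
  | h a b => simp

namespace SimpleGraph

variable {G : SimpleGraph V}

theorem Reachable.deleteEdges_or {x c c' : V} (h : G.Reachable x c) :
    (G.deleteEdges {s(c, c')}).Reachable x c ∨ (G.deleteEdges {s(c, c')}).Reachable x c' := by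
  obtain ⟨p⟩ := h
  induction p with
  | nil => exact Or.inl .rfl
  | @cons x y c hxy _ ih =>
    by_cases he : s(x, y) = s(c, c')
    · rcases Sym2.eq_iff.1 he with ⟨rfl, -⟩ | ⟨rfl, -⟩
      · exact Or.inl .rfl
      · exact Or.inr .rfl
    · have hxy' : (G.deleteEdges {s(c, c')}).Adj x y := by simp [hxy, he]
      exact ih.imp hxy'.reachable.trans hxy'.reachable.trans

theorem Connected.reachable_deleteEdges_or_of_not_reachable (hG : G.Connected) {e : Sym2 V}
    {a b : V} (hab : ¬ (G.deleteEdges {e}).Reachable a b) (x : V) :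
    (G.deleteEdges {e}).Reachable x a ∨ (G.deleteEdges {e}).Reachable x b := by
  induction e with
  | h c c' =>
    have key (y : V) := (hG.preconnected y c).deleteEdges_or (c' := c')
    rcases key x with hx | hx <;> rcases key a with ha | ha <;> rcases key b with hb | hb <;>
      first
      | exact absurd (ha.trans hb.symm) hab
      | exact Or.inl (hx.trans ha.symm)
      | exact Or.inr (hx.trans hb.symm)

theorem IsAcyclic.not_reachable_deleteEdges (hG : G.IsAcyclic) {u v : V} {p : G.Walk u v}
    (hp : p.IsPath) {e : Sym2 V} (he : e ∈ p.edges) : ¬ (G.deleteEdges {e}).Reachable u v := by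
  classical
  induction e with
  | h c c' =>
    rw [reachable_deleteEdges_iff_exists_walk]
    rintro ⟨r, hr⟩
    have hrp : r.bypass = p :=
      congrArg Subtype.val ((hG.subsingleton_path u v).elim ⟨_, r.bypass_isPath⟩ ⟨p, hp⟩)
    exact hr (r.edges_bypass_subset_edges (hrp ▸ he))

section MinConnectedEdgeSet

variable {M : Type*} [AddCommMonoid M] [LinearOrder M]

structure IsMinConnectedEdgeSet (G : SimpleGraph V) (w : Sym2 V → M) (F : Finset (Sym2 V)) :
    Prop where
  subset : (F : Set (Sym2 V)) ⊆ G.edgeSet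
  connected : (fromEdgeSet (F : Set (Sym2 V))).Connected
  sum_le : ∀ F' : Finset (Sym2 V), (F' : Set (Sym2 V)) ⊆ G.edgeSet →
    (fromEdgeSet (F' : Set (Sym2 V))).Connected → ∑ e ∈ F, w e ≤ ∑ e ∈ F', w e

theorem Connected.exists_isMinConnectedEdgeSet [Finite V] (hG : G.Connected) (w : Sym2 V → M) :
    ∃ F, G.IsMinConnectedEdgeSet w F := by
  obtain ⟨F, ⟨hFG, hF⟩, hmin⟩ := Set.exists_min_image
    {F : Finset (Sym2 V) |
      (F : Set (Sym2 V)) ⊆ G.edgeSet ∧ (fromEdgeSet (F : Set (Sym2 V))).Connected}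
    (fun F => ∑ e ∈ F, w e) (Set.toFinite _)
    ⟨G.edgeSet.toFinite.toFinset, by simpa using hG⟩
  exact ⟨F, hFG, hF, fun F' hF'G hF' => hmin F' ⟨hF'G, hF'⟩⟩

namespace IsMinConnectedEdgeSet

variable {w : Sym2 V → M} {F : Finset (Sym2 V)}

theorem fromEdgeSet_le (hF : G.IsMinConnectedEdgeSet w F) :
    fromEdgeSet (F : Set (Sym2 V)) ≤ G :=
  (fromEdgeSet_mono hF.subset).trans (fromEdgeSet_edgeSet G).le

variable [IsOrderedCancelAddMonoid M]

theorem isAcyclic (hF : G.IsMinConnectedEdgeSet w F) (hw : ∀ e, 0 < w e) :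
    (fromEdgeSet (F : Set (Sym2 V))).IsAcyclic := by
  classical
  refine isAcyclic_iff_forall_adj_isBridge.2 fun x y hxy => ?_
  by_contra hbr
  have hconn := hF.connected.connected_delete_edge_of_not_isBridge hbr
  rw [deleteEdges_fromEdgeSet, ← Finset.coe_erase] at hconn
  have hmem : s(x, y) ∈ F := ((fromEdgeSet_adj _).1 hxy).1
  have hle := hF.sum_le _ ((Finset.coe_subset.2 (F.erase_subset _)).trans hF.subset) hconn
  rw [← Finset.sum_erase_add F w hmem] at hle
  exact (lt_add_of_pos_right _ (hw _)).not_ge hle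

/-- Exchanging `e` for `s(a, b)` gives another connected subgraph. -/
theorem le_of_not_reachable_deleteEdges (hF : G.IsMinConnectedEdgeSet w F) {e : Sym2 V}
    (he : e ∈ F) {a b : V} (hab : G.Adj a b)
    (hsep : ¬ ((fromEdgeSet (F : Set (Sym2 V))).deleteEdges {e}).Reachable a b) :
    w e ≤ w s(a, b) := by
  classical
  have hcomp := hF.connected.reachable_deleteEdges_or_of_not_reachable hsep
  rw [deleteEdges_fromEdgeSet, ← Finset.coe_erase] at hsep hcomp
  set F' := insert s(a, b) (F.erase e)
  have hsub : fromEdgeSet ((F.erase e : Finset (Sym2 V)) : Set (Sym2 V)) ≤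
      fromEdgeSet (F' : Set (Sym2 V)) :=
    fromEdgeSet_mono (Finset.coe_subset.2 (Finset.subset_insert _ _))
  have habF' : (fromEdgeSet (F' : Set (Sym2 V))).Adj a b := by simp [F', hab.ne]
  have hconn : (fromEdgeSet (F' : Set (Sym2 V))).Connected := by
    refine (connected_iff_exists_forall_reachable _).2 ⟨a, fun x => ?_⟩
    rcases hcomp x with hxa | hxb
    · exact (hxa.mono hsub).symm
    · exact habF'.reachable.trans (hxb.mono hsub).symm
  have hF'G : (F' : Set (Sym2 V)) ⊆ G.edgeSet := by
    simp only [F', Finset.coe_insert]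
    exact Set.insert_subset hab ((Finset.coe_subset.2 (F.erase_subset _)).trans hF.subset)
  have hnew : s(a, b) ∉ F.erase e := fun h =>
    hsep (Adj.reachable ((fromEdgeSet_adj _).2 ⟨h, hab.ne⟩))
  have hle := hF.sum_le F' hF'G hconn
  rw [Finset.sum_insert hnew, ← Finset.sum_erase_add F w he, add_comm] at hle
  exact le_of_add_le_add_right hle

/-- The cut property of minimum spanning trees. -/
theorem exists_le_of_mem_edges (hF : G.IsMinConnectedEdgeSet w F)
    (hT : (fromEdgeSet (F : Set (Sym2 V))).IsAcyclic) {u v : V}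
    {p : (fromEdgeSet (F : Set (Sym2 V))).Walk u v} (hp : p.IsPath) {e : Sym2 V}
    (he : e ∈ p.edges) (q : G.Walk u v) : ∃ f ∈ q.edges, w e ≤ w f := by
  have hsep := hT.not_reachable_deleteEdges hp he
  obtain ⟨d, hd, hdu, hdv⟩ := q.exists_boundary_dart
    {x | ((fromEdgeSet (F : Set (Sym2 V))).deleteEdges {e}).Reachable u x} .rfl hsep
  have heF : e ∈ F := ((edgeSet_fromEdgeSet _).subset (p.edges_subset_edgeSet he)).1
  exact ⟨d.edge, List.mem_map_of_mem hd,
    hF.le_of_not_reachable_deleteEdges heF d.adj fun hd' => hdv (hdu.trans hd')⟩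

end IsMinConnectedEdgeSet

end MinConnectedEdgeSet

end SimpleGraph

theorem stmt6_exists_spanning_tree_with_same_rho_general
    {V : Type*} [Fintype V] (G : SimpleGraph V) (hG : G.Connected)
    (l : V → NNReal) (ρ : V → V → NNReal)
    (hρ : ∀ u v, u ≠ v → IsLeast {x : NNReal |
      ∃ p : G.Walk u v, p.IsPath ∧ x = (p.support.map l).foldr max 0} (ρ u v)) :
    ∃ T : SimpleGraph V, T ≤ G ∧ T.IsTree ∧
      ∀ u v, u ≠ v → ∀ p : T.Walk u v, p.IsPath →
        ρ u v = (p.support.map l).foldr max 0 := by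
  obtain ⟨F, hF⟩ := hG.exists_isMinConnectedEdgeSet fun e => 1 + (e.map l).sup
  have hT : (fromEdgeSet (F : Set (Sym2 V))).IsTree :=
    ⟨hF.connected, hF.isAcyclic fun _ => lt_add_of_pos_of_le one_pos bot_le⟩
  refine ⟨_, hF.fromEdgeSet_le, hT, fun u v huv p hp => le_antisymm ?_ ?_⟩
  · have hpG : ∀ e ∈ p.edges, e ∈ G.edgeSet := fun e he =>
      edgeSet_mono hF.fromEdgeSet_le (p.edges_subset_edgeSet he)
    exact (hρ u v huv).2 ⟨p.transfer G hpG, hp.transfer hpG, by rw [Walk.support_transfer]⟩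
  obtain ⟨q, -, hqρ⟩ := (hρ u v huv).1
  refine List.max_le_of_forall_le _ _ fun _ hx => ?_
  obtain ⟨y, hy, rfl⟩ := List.mem_map.1 hx
  obtain ⟨e, he, hye⟩ :=
    (Walk.mem_support_iff_exists_mem_edges_of_not_nil (Walk.not_nil_of_ne huv)).1 hy
  obtain ⟨f, hf, hef⟩ := hF.exists_le_of_mem_edges hT.isAcyclic hp he q
  calc l y ≤ (e.map l).sup := Sym2.sup_map_le_iff.1 le_rfl y hye
    _ ≤ (f.map l).sup := le_of_add_le_add_left hef
    _ ≤ ρ u v := Sym2.sup_map_le_iff.2 fun x hx => hqρ ▸ List.le_max_of_le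
      (List.mem_map_of_mem (Walk.mem_support_iff_exists_mem_edges.2 (.inr ⟨f, hf, hx⟩)))
      le_rfl

/-- For every connected labeled graph `G(l)` there is a spanning tree `T`
of `G` such that the function `d_l` built from the restriction of `l` to `T` (using
unique paths in `T`) equals `ρ_l` on `V(G) × V(G)`. -/
theorem stmt6_exists_spanning_tree_with_same_rho
    {V : Type*} [Fintype V] (G : SimpleGraph V) (hG : G.Connected)
    (l : V → NNReal) (ρ : V → V → NNReal)
    (hρ0 : ∀ u, ρ u u = 0)
    (hρ : ∀ u v, u ≠ v → IsLeast {x : NNReal |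
      ∃ p : G.Walk u v, p.IsPath ∧ x = (p.support.map l).foldr max 0} (ρ u v)) :
    ∃ T : SimpleGraph V, T ≤ G ∧ T.IsTree ∧
      ∀ u v, u ≠ v → ∀ p : T.Walk u v, p.IsPath →
        ρ u v = (p.support.map l).foldr max 0 :=
  stmt6_exists_spanning_tree_with_same_rho_general G hG l ρ hρ
end
end

section
/- Let G be a connected finite graph with a labeling l : V(G) → ℝ≥0. Then the following are equivalent: (1) ρ_l is an ultrametric on V(G); (2) ρ_l is a metric on V(G); (3) max{l(u), l(v)} > 0 holds for every edge {u,v} ∈ E(G). -/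
/-!
A path from `u` to `v ≠ u` starts with an edge `u w`, so it contains `u` and `w`, and its
maximal label is at least `max (l u) (l w)`. Hence `ρ_l(u, v) > 0` for all `u ≠ v` as soon
as no edge has both end labels zero, while an edge with both labels zero gives `ρ_l(u, v) = 0`.
Symmetry comes from reversing paths, and the strong triangle inequality from concatenating
optimal paths `x → z → y` and shortcutting the resulting walk to a path, which can only lower
the maximal label.
-/

open SimpleGraph

noncomputable section

variable {V : Type*}

namespace SimpleGraph.Walk

variable {G : SimpleGraph V} (l : V → NNReal)

def labelMax {u v : V} (p : G.Walk u v) : NNReal := (p.support.map l).foldr max 0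

variable {l} {u v w u' v' : V}

lemma le_labelMax {p : G.Walk u v} {x : V} (hx : x ∈ p.support) : l x ≤ p.labelMax l :=
  List.le_max_of_le' 0 (List.mem_map_of_mem hx) le_rfl

lemma labelMax_le_iff {p : G.Walk u v} {b : NNReal} :
    p.labelMax l ≤ b ↔ ∀ x ∈ p.support, l x ≤ b :=
  ⟨fun h _ hx => (le_labelMax hx).trans h, fun h =>
    List.max_le_of_forall_le _ b (by simpa only [List.forall_mem_map] using h)⟩

lemma labelMax_le_of_support_subset {p : G.Walk u v} {q : G.Walk u' v'}
    (h : p.support ⊆ q.support) : p.labelMax l ≤ q.labelMax l :=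
  labelMax_le_iff.2 fun _ hx => le_labelMax (h hx)

lemma labelMax_reverse (p : G.Walk u v) : p.reverse.labelMax l = p.labelMax l :=
  le_antisymm (labelMax_le_of_support_subset (by simp))
    (labelMax_le_of_support_subset (by simp))

lemma labelMax_append_le (p : G.Walk u v) (q : G.Walk v w) :
    (p.append q).labelMax l ≤ max (p.labelMax l) (q.labelMax l) :=
  labelMax_le_iff.2 fun _ hx => (mem_support_append_iff p q).1 hx |>.elim
    (fun h => le_max_of_le_left (le_labelMax h)) (fun h => le_max_of_le_right (le_labelMax h))

lemma labelMax_cons_nil (h : G.Adj u v) : (cons h nil).labelMax l = max (l u) (l v) := by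
  simp [labelMax]

end SimpleGraph.Walk

lemma isUltrametricOn_of_le_max {d : V → V → NNReal} {A : Set V}
    (hzero : ∀ x ∈ A, ∀ y ∈ A, (d x y = 0 ↔ x = y))
    (hsymm : ∀ x ∈ A, ∀ y ∈ A, d x y = d y x)
    (hmax : ∀ x ∈ A, ∀ y ∈ A, ∀ z ∈ A, d x y ≤ max (d x z) (d z y)) :
    IsUltrametricOn d A :=
  ⟨⟨hzero, hsymm, fun x hx y hy z hz =>
    (hmax x hx y hy z hz).trans (max_le le_self_add le_add_self)⟩, hmax⟩

namespace SimpleGraph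

variable {G : SimpleGraph V} {l : V → NNReal} {ρ : V → V → NNReal}

def pathLabelMaxima (G : SimpleGraph V) (l : V → NNReal) (u v : V) : Set NNReal :=
  {x | ∃ p : G.Walk u v, p.IsPath ∧ x = p.labelMax l}

section Minimax

variable (hρ0 : ∀ u, ρ u u = 0)
  (hρ : ∀ u v, u ≠ v → IsLeast (G.pathLabelMaxima l u v) (ρ u v))
include hρ0 hρ

lemma minimax_le_labelMax {u v : V} (p : G.Walk u v) : ρ u v ≤ p.labelMax l := by
  classical
  obtain rfl | huv := eq_or_ne u v
  · simp [hρ0]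
  · exact ((hρ u v huv).2 ⟨p.bypass, p.bypass_isPath, rfl⟩).trans
      (Walk.labelMax_le_of_support_subset p.support_bypass_subset_support)

lemma minimax_symm (u v : V) : ρ u v = ρ v u := by
  have key : ∀ u v, ρ u v ≤ ρ v u := fun u v => by
    obtain rfl | huv := eq_or_ne u v
    · rfl
    obtain ⟨q, -, hq⟩ := (hρ v u huv.symm).1
    simpa [hq, Walk.labelMax_reverse] using minimax_le_labelMax hρ0 hρ q.reverse
  exact le_antisymm (key u v) (key v u)

lemma minimax_le_max (x y z : V) : ρ x y ≤ max (ρ x z) (ρ z y) := by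
  obtain rfl | hxz := eq_or_ne x z
  · exact le_max_right _ _
  obtain rfl | hzy := eq_or_ne z y
  · exact le_max_left _ _
  obtain ⟨p, -, hp⟩ := (hρ x z hxz).1
  obtain ⟨q, -, hq⟩ := (hρ z y hzy).1
  calc ρ x y ≤ (p.append q).labelMax l := minimax_le_labelMax hρ0 hρ _
    _ ≤ max (p.labelMax l) (q.labelMax l) := Walk.labelMax_append_le p q
    _ = max (ρ x z) (ρ z y) := by rw [hp, hq]

lemma minimax_eq_zero_iff (hl : ∀ u v, G.Adj u v → 0 < max (l u) (l v)) {u v : V} :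
    ρ u v = 0 ↔ u = v := by
  refine ⟨fun h0 => by_contra fun huv => ?_, fun h => h ▸ hρ0 u⟩
  obtain ⟨p, -, hp⟩ := (hρ u v huv).1
  have hnil : ¬p.Nil := Walk.not_nil_of_ne huv
  have hsnd : max (l u) (l p.snd) ≤ p.labelMax l :=
    max_le (Walk.le_labelMax p.start_mem_support) (Walk.le_labelMax (p.getVert_mem_support 1))
  exact ((hl u p.snd (p.adj_snd hnil)).trans_le hsnd).ne' (hp ▸ h0)

lemma isUltrametricOn_minimax (hl : ∀ u v, G.Adj u v → 0 < max (l u) (l v)) :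
    IsUltrametricOn ρ Set.univ :=
  isUltrametricOn_of_le_max (fun _ _ _ _ => minimax_eq_zero_iff hρ0 hρ hl)
    (fun x _ y _ => minimax_symm hρ0 hρ x y) (fun x _ y _ z _ => minimax_le_max hρ0 hρ x y z)

lemma pos_max_of_isMetricOn_minimax (hm : IsMetricOn ρ Set.univ) (u v : V) (huv : G.Adj u v) :
    0 < max (l u) (l v) := by
  rw [pos_iff_ne_zero, ← Walk.labelMax_cons_nil huv]
  intro h0
  have : ρ u v = 0 := le_antisymm (h0 ▸ minimax_le_labelMax hρ0 hρ _) zero_le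
  exact huv.ne ((hm.1 u trivial v trivial).1 this)

end Minimax

end SimpleGraph

theorem stmt7_rho_ultrametric_iff_metric_iff_pos_on_edges_general
    {V : Type*} (G : SimpleGraph V)
    (l : V → NNReal) (ρ : V → V → NNReal)
    (hρ0 : ∀ u, ρ u u = 0)
    (hρ : ∀ u v, u ≠ v → IsLeast {x : NNReal |
      ∃ p : G.Walk u v, p.IsPath ∧ x = (p.support.map l).foldr max 0} (ρ u v)) :
    (IsUltrametricOn ρ Set.univ ↔ IsMetricOn ρ Set.univ) ∧
    (IsMetricOn ρ Set.univ ↔ ∀ u v, G.Adj u v → 0 < max (l u) (l v)) := by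
  have hρ' : ∀ u v, u ≠ v → IsLeast (G.pathLabelMaxima l u v) (ρ u v) := hρ
  have pos := pos_max_of_isMetricOn_minimax hρ0 hρ'
  have ultra := isUltrametricOn_minimax hρ0 hρ'
  exact ⟨⟨And.left, fun hm => ultra (pos hm)⟩, ⟨pos, fun hl => (ultra hl).1⟩⟩

/-- For a connected labeled graph `G(l)` and `ρ_l` defined via the minimax
over paths, the following are equivalent: (1) `ρ_l` is an ultrametric; (2) `ρ_l` is a
metric; (3) `max {l u, l v} > 0` for every edge `{u, v}`. -/
theorem stmt7_rho_ultrametric_iff_metric_iff_pos_on_edges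
    {V : Type*} [Fintype V] (G : SimpleGraph V) (hG : G.Connected)
    (l : V → NNReal) (ρ : V → V → NNReal)
    (hρ0 : ∀ u, ρ u u = 0)
    (hρ : ∀ u v, u ≠ v → IsLeast {x : NNReal |
      ∃ p : G.Walk u v, p.IsPath ∧ x = (p.support.map l).foldr max 0} (ρ u v)) :
    (IsUltrametricOn ρ Set.univ ↔ IsMetricOn ρ Set.univ) ∧
    (IsMetricOn ρ Set.univ ↔ ∀ u v, G.Adj u v → 0 < max (l u) (l v)) :=
  stmt7_rho_ultrametric_iff_metric_iff_pos_on_edges_general G l ρ hρ0 hρ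
end
end

section
/- Let T(r) be a nonempty rooted tree. For every equidistant weight w : E(T) → ℝ≥0 there is a unique monotone labeling l : V(T) → ℝ≥0 such that w({u,v}) = (1/2)(l(u) − l(v)) holds whenever v is a direct successor of u. -/
open SimpleGraph

noncomputable section

variable {V : Type*}

/-!
Let `D v` be the total weight of the path from `r` to `v` and `K` the common value of `D` at the
leaves. Then `l v = 2 (K - D v)` is the labeling: it vanishes exactly at the leaves because `D`
strictly increases along edges pointing away from the root, so every inner vertex lies strictly
below some leaf. Conversely, the compatibility condition prescribes `l u - l v` on every edge and
the leaves prescribe `l = 0`, so `l` is determined by induction from the leaves towards the root;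
this induction is well founded because the depth of a vertex is less than the number of vertices.
-/

namespace SimpleGraph.IsTree

variable {G : SimpleGraph V}

def uniquePath (hG : G.IsTree) (u v : V) : G.Walk u v :=
  (hG.existsUnique_path u v).choose

theorem isPath_uniquePath (hG : G.IsTree) (u v : V) : (hG.uniquePath u v).IsPath :=
  (hG.existsUnique_path u v).choose_spec.1

theorem eq_uniquePath (hG : G.IsTree) {u v : V} {p : G.Walk u v} (hp : p.IsPath) :
    p = hG.uniquePath u v :=
  (hG.existsUnique_path u v).choose_spec.2 p hp

end SimpleGraph.IsTree

section RootedTree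

variable {G : SimpleGraph V} {r u v : V}

theorem directSucc_or_directSucc (hG : G.Connected) (h : G.Adj u v) :
    DirectSucc G r u v ∨ DirectSucc G r v u := by
  obtain ⟨p, hp⟩ := (hG v r).exists_isPath
  by_cases hu : u ∈ p.support
  · exact .inl ⟨h, p, hp, hu⟩
  · exact .inr ⟨h.symm, .cons h p, hp.cons hu, by simp⟩

theorem DirectSucc.uniquePath_eq (hG : G.IsTree) (h : DirectSucc G r u v) :
    hG.uniquePath v r = .cons h.1.symm (hG.uniquePath u r) := by
  classical
  obtain ⟨huv, q, hq, hu⟩ := h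
  have htake : q.takeUntil u hu = .cons huv.symm .nil :=
    (hG.existsUnique_path v u).unique (hq.takeUntil hu) (by simp [huv.ne'])
  have hq_eq : q = .cons huv.symm (q.dropUntil u hu) := by
    conv_lhs => rw [← q.take_spec hu, htake]
    rfl
  rw [← hG.eq_uniquePath hq, ← hG.eq_uniquePath (hq.dropUntil hu)]
  exact hq_eq

theorem DirectSucc.length_uniquePath (hG : G.IsTree) (h : DirectSucc G r u v) :
    (hG.uniquePath v r).length = (hG.uniquePath u r).length + 1 := by
  rw [h.uniquePath_eq hG, Walk.length_cons]

theorem DirectSucc.eq_of_directSucc (hG : G.IsTree) {u' : V} (h : DirectSucc G r u v)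
    (h' : DirectSucc G r u' v) : u = u' := by
  simpa using congrArg (·.getVert 1) ((h.uniquePath_eq hG).symm.trans (h'.uniquePath_eq hG))

theorem not_directSucc_root (hG : G.IsTree) : ¬ DirectSucc G r u r := by
  intro h
  have hnil : (hG.uniquePath r r).length = 0 := by
    rw [← hG.eq_uniquePath Walk.IsPath.nil, Walk.length_nil]
  have := h.length_uniquePath hG
  omega

theorem exists_directSucc_of_outDeg_ne_zero [Finite V] (hG : G.IsTree) (hv : outDeg G r v ≠ 0) :
    ∃ v', DirectSucc G r v v' := by
  by_contra! hleaf
  have hparent : ∀ u ∈ G.neighborSet v, DirectSucc G r u v := fun u hu =>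
    (directSucc_or_directSucc hG.connected hu.symm).resolve_right (hleaf u)
  have hsub : (G.neighborSet v).Subsingleton := fun u hu u' hu' =>
    (hparent u hu).eq_of_directSucc hG (hparent u' hu')
  have hcard : Nat.card (G.neighborSet v) ≤ 1 :=
    (Finite.card_le_one_iff_subsingleton).2 hsub.coe_sort
  apply hv
  unfold outDeg vdeg
  split_ifs with hvr
  · subst hvr
    have hempty : G.neighborSet v = ∅ :=
      Set.eq_empty_of_forall_notMem fun u hu => not_directSucc_root hG (hparent u hu)
    simp [hempty]
  · omega

theorem wellFounded_directSucc [Fintype V] (hG : G.IsTree) (r : V) :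
    WellFounded fun v u => DirectSucc G r u v :=
  Subrelation.wf
    (fun {v u} h => by
      have := h.length_uniquePath hG
      have := (hG.isPath_uniquePath v r).length_lt
      show Fintype.card V - _ < Fintype.card V - _
      omega)
    (measure fun v => Fintype.card V - (hG.uniquePath v r).length).wf

theorem eq_of_eq_on_leaves_of_directSucc_add [Fintype V] (hG : G.IsTree) {M : Type*} [Add M]
    {l l' : V → M} (c : V → V → M) (hleaf : ∀ v, outDeg G r v = 0 → l v = l' v)
    (hl : ∀ u v, DirectSucc G r u v → l u = l v + c u v)
    (hl' : ∀ u v, DirectSucc G r u v → l' u = l' v + c u v) : l = l' := by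
  funext v
  induction v using (wellFounded_directSucc hG r).induction with
  | _ v ih =>
    by_cases hv : outDeg G r v = 0
    · exact hleaf v hv
    · obtain ⟨v', h⟩ := exists_directSucc_of_outDeg_ne_zero hG hv
      rw [hl v v' h, hl' v v' h, ih v' h]

end RootedTree

section PathWeight

variable {G : SimpleGraph V} (hG : G.IsTree) {w : Sym2 V → NNReal} {r u v : V} {K : NNReal}

def pathWeight (w : Sym2 V → NNReal) (r v : V) : NNReal :=
  ((hG.uniquePath v r).edges.map w).sum

theorem pathWeight_of_directSucc (h : DirectSucc G r u v) :
    pathWeight hG w r v = w s(u, v) + pathWeight hG w r u := by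
  simp [pathWeight, h.uniquePath_eq hG, Sym2.eq_swap]

def equidistantLabel (w : Sym2 V → NNReal) (r : V) (K : NNReal) (v : V) : NNReal :=
  2 * (K - pathWeight hG w r v)

variable (hK : ∀ u, outDeg G r u = 0 → ∀ p : G.Walk r u, p.IsPath → (p.edges.map w).sum = K)
include hK

theorem pathWeight_eq_of_outDeg_eq_zero (hv : outDeg G r v = 0) : pathWeight hG w r v = K := by
  rw [← hK v hv _ (hG.isPath_uniquePath v r).reverse]
  simp [pathWeight]

theorem pathWeight_le [Fintype V] (v : V) : pathWeight hG w r v ≤ K := by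
  induction v using (wellFounded_directSucc hG r).induction with
  | _ v ih =>
    by_cases hv : outDeg G r v = 0
    · exact (pathWeight_eq_of_outDeg_eq_zero hG hK hv).le
    · obtain ⟨v', h⟩ := exists_directSucc_of_outDeg_ne_zero hG hv
      calc pathWeight hG w r v ≤ w s(v, v') + pathWeight hG w r v := le_add_self
        _ = pathWeight hG w r v' := (pathWeight_of_directSucc hG h).symm
        _ ≤ K := ih v' h

theorem pathWeight_lt_of_outDeg_ne_zero [Fintype V] (hpos : ∀ e ∈ G.edgeSet, 0 < w e)
    (hv : outDeg G r v ≠ 0) : pathWeight hG w r v < K := by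
  obtain ⟨v', h⟩ := exists_directSucc_of_outDeg_ne_zero hG hv
  calc pathWeight hG w r v < w s(v, v') + pathWeight hG w r v :=
        lt_add_of_pos_left _ (hpos _ h.1)
    _ = pathWeight hG w r v' := (pathWeight_of_directSucc hG h).symm
    _ ≤ K := pathWeight_le hG hK v'

theorem equidistantLabel_of_directSucc [Fintype V] (h : DirectSucc G r u v) :
    equidistantLabel hG w r K u = equidistantLabel hG w r K v + 2 * w s(u, v) := by
  have hle := pathWeight_le hG hK v
  rw [pathWeight_of_directSucc hG h] at hle
  rw [equidistantLabel, equidistantLabel, pathWeight_of_directSucc hG h, ← mul_add, add_comm (w _),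
    ← tsub_tsub, tsub_add_cancel_of_le (le_tsub_of_add_le_right hle)]

theorem monotoneLabeling_equidistantLabel [Fintype V] (hpos : ∀ e ∈ G.edgeSet, 0 < w e) :
    MonotoneLabeling G r (equidistantLabel hG w r K) := by
  refine ⟨fun v => ?_, fun u v h => ?_⟩
  · simp only [equidistantLabel, mul_eq_zero, two_ne_zero, false_or, tsub_eq_zero_iff_le]
    refine ⟨fun hKle => ?_, fun hv => (pathWeight_eq_of_outDeg_eq_zero hG hK hv).ge⟩
    by_contra hv
    exact (pathWeight_lt_of_outDeg_ne_zero hG hK hpos hv).not_ge hKle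
  · rw [equidistantLabel_of_directSucc hG hK h]
    exact lt_add_of_pos_right _ (mul_pos two_pos (hpos _ h.1))

end PathWeight

theorem NNReal.eq_tsub_div_two_iff {a b c : NNReal} (h : b ≤ a) :
    c = (a - b) / 2 ↔ a = b + 2 * c := by
  rw [eq_div_iff two_ne_zero, eq_tsub_iff_add_eq_of_le h, eq_comm, add_comm, mul_comm]

theorem stmt9_unique_monotone_labeling_from_equidistant_weight_general
    {V : Type*} [Fintype V] (G : SimpleGraph V) (hG : G.IsTree)
    (r : V) (w : Sym2 V → NNReal)
    (hw : EquidistantWeight G r w) :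
    ∃! l : V → NNReal, MonotoneLabeling G r l ∧
      ∀ u v, DirectSucc G r u v → w s(u, v) = (l u - l v) / 2 := by
  obtain ⟨hpos, K, hK⟩ := hw
  have hmono := monotoneLabeling_equidistantLabel hG hK hpos
  have hstep : ∀ u v, DirectSucc G r u v →
      equidistantLabel hG w r K u = equidistantLabel hG w r K v + 2 * w s(u, v) :=
    fun u v h => equidistantLabel_of_directSucc hG hK h
  refine ⟨equidistantLabel hG w r K, ⟨hmono, fun u v h => ?_⟩, ?_⟩
  · exact (NNReal.eq_tsub_div_two_iff (hmono.2 u v h).le).2 (hstep u v h)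
  · rintro l ⟨hl, hlw⟩
    refine eq_of_eq_on_leaves_of_directSucc_add hG (fun u v => 2 * w s(u, v)) (fun v hv => ?_)
      (fun u v h => (NNReal.eq_tsub_div_two_iff (hl.2 u v h).le).1 (hlw u v h)) hstep
    rw [(hl.1 v).2 hv, (hmono.1 v).2 hv]

/-- For every equidistant weight `w` of a nonempty rooted tree `T(r)` there
is a unique monotone labeling `l` such that `w {u, v} = (l u - l v) / 2` whenever `v` is
a direct successor of `u`. -/
theorem stmt9_unique_monotone_labeling_from_equidistant_weight
    {V : Type*} [Fintype V] (G : SimpleGraph V) (hG : G.IsTree)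
    (hE : G.edgeSet.Nonempty) (r : V) (w : Sym2 V → NNReal)
    (hw : EquidistantWeight G r w) :
    ∃! l : V → NNReal, MonotoneLabeling G r l ∧
      ∀ u v, DirectSucc G r u v → w s(u, v) = (l u - l v) / 2 :=
  stmt9_unique_monotone_labeling_from_equidistant_weight_general G hG r w hw
end
end

section
/- Let T(r,w) be an equidistant weighted rooted tree and let l : V(T) → ℝ≥0 be the monotone labeling satisfying w({u,v}) = (1/2)(l(u) − l(v)) whenever v is a direct successor of u. Let u1 and u2 be two distinct vertices of V_0^+(T) and let P be the path joining u1 and u2 in T. Then d_w(u1, u2) = max_{v ∈ V(P)} l(v). -/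
open SimpleGraph

noncomputable section

variable {V : Type*}

/-
Every path from a vertex to the root `r` climbs: each step goes from a vertex to its parent,
so along it the labels increase and, since `w({u,v}) = (l u - l v)/2`, the weights telescope
to half the label gain. The path joining the leaves `u₁` and `u₂` climbs from `u₁` to the
vertex `m` where their root paths meet and descends from `m` to `u₂`. Hence its top label is
`l m`, and its length is `l m / 2 + l m / 2` because leaves carry label `0`.
-/

namespace SimpleGraph.Walk

variable {G : SimpleGraph V}

def IsAscending (r : V) {u v : V} (p : G.Walk u v) : Prop :=
  ∀ d ∈ p.darts, DirectSucc G r d.snd d.fst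

@[simp]
theorem isAscending_nil {r u : V} : (nil : G.Walk u u).IsAscending r := by
  simp [IsAscending]

@[simp]
theorem isAscending_cons {r u v w : V} (h : G.Adj u v) (p : G.Walk v w) :
    (cons h p).IsAscending r ↔ DirectSucc G r v u ∧ p.IsAscending r := by
  simp [IsAscending]

theorem IsPath.isAscending {r u : V} {q : G.Walk u r} (hq : q.IsPath) : q.IsAscending r := by
  induction q with
  | nil => exact isAscending_nil
  | cons h q ih =>
    exact (isAscending_cons h q).2 ⟨⟨h.symm, cons h q, hq, by simp⟩, ih hq.of_cons⟩

theorem IsAscending.of_append_left {r u v w : V} {p : G.Walk u v} {q : G.Walk v w}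
    (h : (p.append q).IsAscending r) : p.IsAscending r :=
  fun d hd => h d (by simp [darts_append, hd])

section Labels

variable {r : V} {l : V → NNReal} (hl : ∀ u v, DirectSucc G r u v → l v < l u)
include hl

theorem IsAscending.label_le_of_mem_support {a m : V} {t : G.Walk a m}
    (ht : t.IsAscending r) {v : V} (hv : v ∈ t.support) : l v ≤ l m := by
  induction t generalizing v with
  | nil => simp_all
  | cons h t ih =>
    rw [isAscending_cons] at ht
    rw [support_cons, List.mem_cons] at hv
    rcases hv with rfl | hv
    · exact (hl _ _ ht.1).le.trans (ih ht.2 t.start_mem_support)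
    · exact ih ht.2 hv

theorem IsAscending.sum_edges_weight {w : Sym2 V → NNReal}
    (hrel : ∀ u v, DirectSucc G r u v → w s(u, v) = (l u - l v) / 2)
    {a m : V} {t : G.Walk a m} (ht : t.IsAscending r) :
    (t.edges.map w).sum = (l m - l a) / 2 := by
  induction t with
  | nil => simp
  | cons h t ih =>
    rename_i x y z
    rw [isAscending_cons] at ht
    have hxy : l x ≤ l y := (hl _ _ ht.1).le
    have hyz : l y ≤ l z := ht.2.label_le_of_mem_support hl t.start_mem_support
    rw [edges_cons, List.map_cons, List.sum_cons, ih ht.2, Sym2.eq_swap, hrel _ _ ht.1,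
      ← add_div, add_comm, tsub_add_tsub_cancel hyz hxy]

end Labels

theorem exists_append_reverse_isPath_of_isPath {u₁ u₂ r : V} {q₁ : G.Walk u₁ r}
    {q₂ : G.Walk u₂ r} (hq₁ : q₁.IsPath) (hq₂ : q₂.IsPath) :
    ∃ (m : V) (t₁ : G.Walk u₁ m) (s₁ : G.Walk m r) (t₂ : G.Walk u₂ m) (s₂ : G.Walk m r),
      t₁.append s₁ = q₁ ∧ t₂.append s₂ = q₂ ∧ (t₁.append t₂.reverse).IsPath := by
  classical
  have meet : ∀ {u : V} (q : G.Walk u r) (hu : u ∈ q₂.support), ∃ (m : V) (t₁ : G.Walk u m)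
      (s₁ : G.Walk m r) (t₂ : G.Walk u₂ m) (s₂ : G.Walk m r),
      t₁.append s₁ = q ∧ t₂.append s₂ = q₂ ∧ (t₁.append t₂.reverse).IsPath :=
    fun q hu => ⟨_, nil, q, q₂.takeUntil _ hu, q₂.dropUntil _ hu, rfl, q₂.take_spec hu,
      by simpa using (hq₂.takeUntil hu).reverse⟩
  -- `m` is the first vertex of `q₁` that lies on `q₂`.
  induction q₁ with
  | nil => exact meet nil q₂.end_mem_support
  | cons h q ih =>
    rename_i u _ _
    by_cases hu : u ∈ q₂.support
    · exact meet _ hu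
    obtain ⟨m, t₁, s₁, t₂, s₂, rfl, hq₂_eq, ht⟩ := ih hq₁.of_cons hq₂ meet
    refine ⟨m, cons h t₁, s₁, t₂, s₂, rfl, hq₂_eq, ?_⟩
    rw [cons_append, cons_isPath_iff]
    refine ⟨ht, fun hmem => ?_⟩
    rw [mem_support_append_iff, support_reverse, List.mem_reverse] at hmem
    rcases hmem with hmem | hmem
    · exact ((cons_isPath_iff h _).1 hq₁).2 (support_subset_support_append_left _ _ hmem)
    · exact hu (hq₂_eq ▸ support_subset_support_append_left _ _ hmem)

end SimpleGraph.Walk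

open SimpleGraph Walk in
theorem stmt10_distance_eq_max_label_on_path_general
    {V : Type*} (G : SimpleGraph V) (hG : G.IsTree) (r : V)
    (w : Sym2 V → NNReal)
    (l : V → NNReal) (hl : MonotoneLabeling G r l)
    (hrel : ∀ u v, DirectSucc G r u v → w s(u, v) = (l u - l v) / 2)
    (d : V → V → NNReal)
    (hd : ∀ u v, ∀ p : G.Walk u v, p.IsPath → d u v = (p.edges.map w).sum)
    (u1 u2 : V) (h1 : outDeg G r u1 = 0) (h2 : outDeg G r u2 = 0)
    (P : G.Walk u1 u2) (hP : P.IsPath) :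
    d u1 u2 = (P.support.map l).foldr max 0 := by
  obtain ⟨q₁, hq₁, -⟩ := hG.existsUnique_path u1 r
  obtain ⟨q₂, hq₂, -⟩ := hG.existsUnique_path u2 r
  obtain ⟨m, t₁, s₁, t₂, s₂, rfl, rfl, ht⟩ := exists_append_reverse_isPath_of_isPath hq₁ hq₂
  have ht₁ := hq₁.isAscending.of_append_left
  have ht₂ := hq₂.isAscending.of_append_left
  obtain rfl : P = t₁.append t₂.reverse := (hG.existsUnique_path u1 u2).unique hP ht
  have hdist : d u1 u2 = l m := by
    rw [hd _ _ _ hP, edges_append, edges_reverse, List.map_append, List.map_reverse,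
      List.sum_append, List.sum_reverse, ht₁.sum_edges_weight hl.2 hrel,
      ht₂.sum_edges_weight hl.2 hrel, (hl.1 u1).2 h1, (hl.1 u2).2 h2, tsub_zero, add_halves]
  have hpeak : ∀ v ∈ (t₁.append t₂.reverse).support, l v ≤ l m := by
    simp only [mem_support_append_iff, support_reverse, List.mem_reverse]
    rintro v (hv | hv)
    exacts [ht₁.label_le_of_mem_support hl.2 hv, ht₂.label_le_of_mem_support hl.2 hv]
  rw [hdist, ← bot_eq_zero']
  refine le_antisymm (List.le_max_of_le (List.mem_map_of_mem (by simp)) le_rfl) ?_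
  exact List.max_le_of_forall_le _ _ (by simpa using hpeak)

/-- In an equidistant tree `T(r, w)` with corresponding monotone labeling
`l`, for distinct `u₁, u₂ ∈ V₀⁺(T)` and the path `P` joining them,
`d_w (u₁, u₂) = max_{v ∈ V(P)} l v`. -/
theorem stmt10_distance_eq_max_label_on_path
    {V : Type*} [Fintype V] (G : SimpleGraph V) (hG : G.IsTree) (r : V)
    (w : Sym2 V → NNReal) (hw : EquidistantWeight G r w)
    (l : V → NNReal) (hl : MonotoneLabeling G r l)
    (hrel : ∀ u v, DirectSucc G r u v → w s(u, v) = (l u - l v) / 2)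
    (d : V → V → NNReal)
    (hd : ∀ u v, ∀ p : G.Walk u v, p.IsPath → d u v = (p.edges.map w).sum)
    (u1 u2 : V) (h1 : outDeg G r u1 = 0) (h2 : outDeg G r u2 = 0) (hne : u1 ≠ u2)
    (P : G.Walk u1 u2) (hP : P.IsPath) :
    d u1 u2 = (P.support.map l).foldr max 0 :=
  stmt10_distance_eq_max_label_on_path_general G hG r w l hl hrel d hd u1 u2 h1 h2 P hP
end
end

section
/- Let T(r,w) be an equidistant weighted rooted tree such that δ⁺(v) ≥ 2 holds for some v ∈ V(T). Then there is an equidistant weighted rooted tree T^∇(r^∇, w^∇) such that V_1^+(T^∇) = ∅, V_0^+(T^∇) = V_0^+(T), V(T^∇) ⊆ V(T), |V(T^∇)| + |V_1^+(T)| = |V(T)|, and the restriction of d_w to V_0^+(T) × V_0^+(T) equals the restriction of d_{w^∇} to V_0^+(T^∇) × V_0^+(T^∇). -/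
open SimpleGraph

noncomputable section

variable {V : Type*}

/-!
Remove the vertices of out-degree one one at a time. Such a vertex `x` is either the root with a
single neighbour `c`, or a non-root vertex with exactly two neighbours `a ≠ b`. In the first case
delete `x` and re-root at `c`, which lowers the common root-to-leaf distance by `w(xc)`; in the
second delete `x` and join `a` to `b` by an edge of weight `w(xa) + w(xb)`. Either way the result
is a tree, all other out-degrees are unchanged, and every path of the new tree becomes a path of
the old one of the same weight once `x` is reinserted, so leaves and leaf-to-leaf distances are
preserved.
-/

namespace SimpleGraph

variable {W : Type*} {G : SimpleGraph V}

theorem Reachable.map_of_adj_imp {H : SimpleGraph W} (f : V → W)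
    (hf : ∀ ⦃u v⦄, G.Adj u v → f u = f v ∨ H.Adj (f u) (f v)) {u v : V}
    (h : G.Reachable u v) : H.Reachable (f u) (f v) := by
  obtain ⟨p⟩ := h
  induction p with
  | nil => rfl
  | cons hadj _ ih =>
    rcases hf hadj with heq | hadj'
    · exact heq ▸ ih
    · exact hadj'.reachable.trans ih

end SimpleGraph

open SimpleGraph

lemma outDeg_iso {W : Type*} {G : SimpleGraph V} {H : SimpleGraph W} (φ : G ≃g H) (r v : V) :
    outDeg G r v = outDeg H (φ r) (φ v) := by
  classical
  have hdeg : vdeg G v = vdeg H (φ v) := Nat.card_congr (φ.mapNeighborSet v)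
  simp only [outDeg, hdeg]
  exact if_congr φ.injective.eq_iff.symm rfl rfl

section Suppress

variable {G : SimpleGraph V} {x : V} {a b : ({x}ᶜ : Set V)}

/-- Suppressing the vertex `x` between `a` and `b`: delete `x` and join `a` to `b`. For `a = b`
the added edge is a loop, hence absent, and `x` is just deleted (a root of degree one). -/
def suppress (G : SimpleGraph V) (x : V) (a b : ({x}ᶜ : Set V)) : SimpleGraph ({x}ᶜ : Set V) :=
  G.induce {x}ᶜ ⊔ edge a b

open Classical in
def retractTo (a : ({x}ᶜ : Set V)) (y : V) : ({x}ᶜ : Set V) :=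
  if h : y = x then a else ⟨y, h⟩

lemma retractTo_self : retractTo a x = a := by
  unfold retractTo; exact dif_pos rfl

lemma retractTo_coe (y : ({x}ᶜ : Set V)) : retractTo a y = y := by
  unfold retractTo; exact dif_neg y.2

lemma suppress_adj (hab : a ≠ b) : (suppress G x a b).Adj a b :=
  .inr ((edge_adj ..).mpr ⟨.inl ⟨rfl, rfl⟩, hab⟩)

lemma adj_iff_of_neighborSet_eq (hN : G.neighborSet x = {↑a, ↑b}) {y : V} :
    G.Adj x y ↔ y = a ∨ y = b := by
  rw [← mem_neighborSet, hN, Set.mem_insert_iff, Set.mem_singleton_iff]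

lemma eq_or_suppress_adj_retractTo_of_adj_self (hN : G.neighborSet x = {↑a, ↑b}) {z : V}
    (h : G.Adj x z) : a = retractTo a z ∨ (suppress G x a b).Adj a (retractTo a z) := by
  rcases (adj_iff_of_neighborSet_eq hN).mp h with rfl | rfl
  · exact .inl (retractTo_coe a).symm
  · rw [retractTo_coe]
    exact (eq_or_ne a b).imp_right suppress_adj

lemma eq_or_suppress_adj_retractTo (hN : G.neighborSet x = {↑a, ↑b}) {y z : V}
    (h : G.Adj y z) :
    retractTo a y = retractTo a z ∨ (suppress G x a b).Adj (retractTo a y) (retractTo a z) := by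
  by_cases hy : y = x <;> by_cases hz : z = x
  · exact absurd (hy.trans hz.symm) h.ne
  · subst hy
    rw [retractTo_self]
    exact eq_or_suppress_adj_retractTo_of_adj_self hN h
  · subst hz
    rw [retractTo_self, eq_comm, adj_comm]
    exact eq_or_suppress_adj_retractTo_of_adj_self hN h.symm
  · unfold retractTo
    rw [dif_neg hy, dif_neg hz]
    exact .inr (.inl h)

lemma suppress_connected (hG : G.Connected) (hN : G.neighborSet x = {↑a, ↑b}) :
    (suppress G x a b).Connected := by
  refine (connected_iff _).mpr ⟨fun u v => ?_, ⟨a⟩⟩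
  simpa [retractTo_coe] using
    (hG.preconnected u v).map_of_adj_imp (retractTo a) fun _ _ => eq_or_suppress_adj_retractTo hN

lemma not_adj_of_neighborSet_eq (hG : G.IsAcyclic) (hN : G.neighborSet x = {↑a, ↑b}) :
    ¬ G.Adj a b := by
  classical
  exact fun hab => hG.cliqueFree le_rfl {x, ↑a, ↑b} <| is3Clique_triple_iff.mpr
    ⟨(adj_iff_of_neighborSet_eq hN).mpr (.inl rfl),
      (adj_iff_of_neighborSet_eq hN).mpr (.inr rfl), hab⟩

lemma not_reachable_induce_of_neighborSet_eq (hG : G.IsAcyclic)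
    (hN : G.neighborSet x = {↑a, ↑b}) (hab : a ≠ b) : ¬ (G.induce {x}ᶜ).Reachable a b := by
  classical
  rintro ⟨p⟩
  have hax : G.Adj a x := ((adj_iff_of_neighborSet_eq hN).mpr (.inl rfl)).symm
  have hxb : G.Adj x b := (adj_iff_of_neighborSet_eq hN).mpr (.inr rfl)
  let ι := (Embedding.induce (G := G) ({x}ᶜ : Set V)).toHom
  let q : G.Walk a b := p.toPath.1.map ι
  have hq : q.IsPath := p.toPath.2.map Subtype.val_injective
  have hpath : (Walk.cons hax (Walk.cons hxb .nil)).IsPath := by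
    simp [hax.ne, hxb.ne, Subtype.val_injective.ne hab]
  have heq : q = _ :=
    congrArg Subtype.val ((hG.subsingleton_path a b).elim ⟨q, hq⟩ ⟨_, hpath⟩)
  have hx : x ∈ q.support := by rw [heq]; simp
  obtain ⟨y, -, hy⟩ := List.mem_map.mp (Walk.support_map ι _ ▸ hx)
  exact y.2 hy

lemma suppress_isTree (hG : G.IsTree) (hN : G.neighborSet x = {↑a, ↑b}) :
    (suppress G x a b).IsTree := by
  refine ⟨suppress_connected hG.connected hN,
    isAcyclic_sup_fromEdgeSet_iff.mpr ⟨hG.isAcyclic.induce _, fun h => .inl ?_⟩⟩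
  by_contra hab
  exact not_reachable_induce_of_neighborSet_eq hG.isAcyclic hN hab h

lemma suppress_adj_iff {u t : ({x}ᶜ : Set V)} :
    (suppress G x a b).Adj u t ↔ G.Adj u t ∨ s(u, t) = s(a, b) ∧ u ≠ t := by
  rw [suppress, sup_adj, induce_adj, adj_edge, eq_comm]

lemma adj_center_of_suppress_adj (hN : G.neighborSet x = {↑a, ↑b}) {u t : ({x}ᶜ : Set V)}
    (h : (suppress G x a b).Adj u t) (h' : ¬ G.Adj u t) : G.Adj u x ∧ G.Adj x t := by
  have hut := ((suppress_adj_iff.mp h).resolve_left h').1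
  simp only [G.adj_comm _ x, adj_iff_of_neighborSet_eq hN, Subtype.val_inj]
  rcases Sym2.eq_iff.mp hut with ⟨rfl, rfl⟩ | ⟨rfl, rfl⟩ <;> simp

open Classical in
def unsuppressWalk (hN : G.neighborSet x = {↑a, ↑b}) :
    ∀ {u v : ({x}ᶜ : Set V)}, (suppress G x a b).Walk u v → G.Walk u v
  | _, _, .nil => .nil
  | _, _, .cons h p =>
    if h' : G.Adj _ _ then .cons h' (unsuppressWalk hN p)
    else
      have hx := adj_center_of_suppress_adj hN h h'
      .cons hx.1 (.cons hx.2 (unsuppressWalk hN p))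

open Classical in
def suppressWeight (w : Sym2 V → NNReal) (x : V) (a b : ({x}ᶜ : Set V))
    (e : Sym2 ({x}ᶜ : Set V)) : NNReal :=
  if e = s(a, b) then w s(x, a) + w s(x, b) else w (e.map (↑))

lemma mk_ne_of_adj_of_not_adj (hnadj : ¬ G.Adj a b) {u t : ({x}ᶜ : Set V)} (h : G.Adj u t) :
    s(u, t) ≠ s(a, b) := by
  rintro hut
  rcases Sym2.eq_iff.mp hut with ⟨rfl, rfl⟩ | ⟨rfl, rfl⟩
  exacts [hnadj h, hnadj h.symm]

variable (hN : G.neighborSet x = {↑a, ↑b})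

lemma count_coe_support_unsuppressWalk [DecidableEq V] {u v : ({x}ᶜ : Set V)}
    (p : (suppress G x a b).Walk u v) (y : ({x}ᶜ : Set V)) :
    (unsuppressWalk hN p).support.count ↑y = p.support.count y := by
  induction p with
  | nil => simp [unsuppressWalk, List.count_singleton, Subtype.val_inj]
  | cons h p ih =>
    unfold unsuppressWalk
    split_ifs <;> simp [ih, List.count_cons, Subtype.val_inj, Ne.symm y.2]

lemma count_support_unsuppressWalk [DecidableEq V] (hnadj : ¬ G.Adj a b) {u v : ({x}ᶜ : Set V)}
    (p : (suppress G x a b).Walk u v) :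
    (unsuppressWalk hN p).support.count x = p.edges.count s(a, b) := by
  induction p with
  | @nil u =>
    have hux : (u : V) ≠ x := u.2
    simp [unsuppressWalk, hux]
  | @cons u t v h p ih =>
    have hux : (u : V) ≠ x := u.2
    unfold unsuppressWalk
    split_ifs with h'
    · simp [ih, hux, mk_ne_of_adj_of_not_adj hnadj h']
    · simp [ih, hux, ((suppress_adj_iff.mp h).resolve_left h').1]

lemma isPath_unsuppressWalk (hnadj : ¬ G.Adj a b) {u v : ({x}ᶜ : Set V)}
    {p : (suppress G x a b).Walk u v} (hp : p.IsPath) : (unsuppressWalk hN p).IsPath := by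
  classical
  rw [Walk.isPath_def, List.nodup_iff_count_le_one]
  intro y
  by_cases hy : y = x
  · rw [hy, count_support_unsuppressWalk hN hnadj]
    exact List.nodup_iff_count_le_one.mp hp.isTrail.edges_nodup _
  · rw [count_coe_support_unsuppressWalk hN p ⟨y, hy⟩]
    exact List.nodup_iff_count_le_one.mp hp.support_nodup _

lemma sum_unsuppressWalk (hnadj : ¬ G.Adj a b) (w : Sym2 V → NNReal) {u v : ({x}ᶜ : Set V)}
    (p : (suppress G x a b).Walk u v) :
    ((unsuppressWalk hN p).edges.map w).sum = (p.edges.map (suppressWeight w x a b)).sum := by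
  induction p with
  | nil => rfl
  | cons h p ih =>
    unfold unsuppressWalk
    split_ifs with h'
    · simp [ih, suppressWeight, mk_ne_of_adj_of_not_adj hnadj h']
    · obtain ⟨rfl, rfl⟩ | ⟨rfl, rfl⟩ :=
        Sym2.eq_iff.mp ((suppress_adj_iff.mp h).resolve_left h').1
      · simp [ih, suppressWeight, Sym2.eq_swap, add_assoc]
      · simp [ih, suppressWeight, Sym2.eq_swap, add_comm, add_assoc]

end Suppress

section Degree

variable [Finite V] {G : SimpleGraph V} {x : V} {a b : ({x}ᶜ : Set V)}

lemma vdeg_eq_ncard_diff_add (G : SimpleGraph V) (v : V) {x : V} [Decidable (G.Adj v x)] :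
    vdeg G v = (G.neighborSet v \ {x}).ncard + if G.Adj v x then 1 else 0 := by
  rw [vdeg, Nat.card_coe_set_eq]
  split_ifs with h
  · exact (Set.ncard_sdiff_singleton_add_one h).symm
  · rw [add_zero, Set.sdiff_singleton_eq_self (s := G.neighborSet v) h]

lemma vdeg_suppress (hnadj : ¬ G.Adj a b) (v : ({x}ᶜ : Set V)) :
    vdeg (suppress G x a b) v =
      (G.neighborSet v \ {x}).ncard + ((edge a b).neighborSet v).ncard := by
  have hdisj : Disjoint ((G.induce {x}ᶜ).neighborSet v) ((edge a b).neighborSet v) :=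
    disjoint_neighborSet.mpr ((disjoint_edge (G.induce {x}ᶜ)).mpr hnadj) v
  rw [vdeg, Nat.card_coe_set_eq, suppress, neighborSet_sup, Set.ncard_union_eq hdisj,
    ← Set.ncard_image_of_injective _ Subtype.val_injective, neighborSet_induce,
    Subtype.image_preimage_coe, Set.sdiff_eq_compl_inter]

lemma vdeg_suppress_of_ne (hG : G.IsAcyclic) (hN : G.neighborSet x = {↑a, ↑b}) (hab : a ≠ b)
    (v : ({x}ᶜ : Set V)) : vdeg (suppress G x a b) v = vdeg G v := by
  classical
  rw [vdeg_suppress (not_adj_of_neighborSet_eq hG hN), vdeg_eq_ncard_diff_add G v (x := x)]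
  congr 1
  have hvx : G.Adj v x ↔ v = a ∨ v = b := by
    rw [adj_comm, adj_iff_of_neighborSet_eq hN, Subtype.val_inj, Subtype.val_inj]
  by_cases hv : v = a ∨ v = b
  · rw [if_pos (hvx.mpr hv), Set.ncard_eq_one]
    rcases hv with rfl | rfl
    · exact ⟨b, by ext; simp [edge_adj]; grind⟩
    · exact ⟨a, by ext; simp [edge_adj]; grind⟩
  · rw [if_neg (hvx.not.mpr hv), Set.ncard_eq_zero]
    ext
    simp [edge_adj]
    grind

lemma vdeg_suppress_self (hG : G.IsAcyclic) {c : ({x}ᶜ : Set V)} (hN : G.neighborSet x = {↑c})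
    (v : ({x}ᶜ : Set V)) [Decidable (v = c)] :
    vdeg (suppress G x c c) v + (if v = c then 1 else 0) = vdeg G v := by
  classical
  have hN' : G.neighborSet x = {↑c, ↑c} := by rw [Set.pair_eq_singleton, hN]
  rw [vdeg_suppress (not_adj_of_neighborSet_eq hG hN'), vdeg_eq_ncard_diff_add G v (x := x),
    edge_self_eq_bot, neighborSet_bot, Set.ncard_empty, add_zero]
  have hvx : G.Adj v x ↔ v = c := by
    rw [G.adj_comm, adj_iff_of_neighborSet_eq hN', or_self, Subtype.val_inj]
  simp only [hvx]

lemma outDeg_suppress_of_ne (hG : G.IsAcyclic) (hN : G.neighborSet x = {↑a, ↑b}) (hab : a ≠ b)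
    {r : V} (hr : r ≠ x) (v : ({x}ᶜ : Set V)) :
    outDeg (suppress G x a b) ⟨r, hr⟩ v = outDeg G r v := by
  classical
  simp only [outDeg, vdeg_suppress_of_ne hG hN hab]
  exact if_congr Subtype.ext_iff rfl rfl

lemma outDeg_suppress_self (hG : G.IsAcyclic) {c : ({x}ᶜ : Set V)} (hN : G.neighborSet x = {↑c})
    (v : ({x}ᶜ : Set V)) : outDeg (suppress G x c c) c v = outDeg G x v := by
  classical
  have hv := vdeg_suppress_self hG hN v
  have hvx : (v : V) ≠ x := v.2
  unfold outDeg
  split_ifs at hv ⊢ <;> omega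

end Degree

/-- `(G', r', w')` arises from the weighted rooted tree `(G, r, w)` by deleting the vertices
outside the range of `f`, without changing out-degrees or the weights of paths. -/
structure IsReduction {W : Type*} (f : W ↪ V) (G' : SimpleGraph W) (r' : W)
    (w' : Sym2 W → NNReal) (G : SimpleGraph V) (r : V) (w : Sym2 V → NNReal) : Prop where
  isTree : G'.IsTree
  equidistantWeight : EquidistantWeight G' r' w'
  outDeg_eq (v : W) : outDeg G' r' v = outDeg G r (f v)
  sum_eq {u v : W} (p : G'.Walk u v) (q : G.Walk (f u) (f v)) :
    p.IsPath → q.IsPath → (p.edges.map w').sum = (q.edges.map w).sum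

section SuppressReduction

variable {G : SimpleGraph V} {x : V} {a b : ({x}ᶜ : Set V)} {w : Sym2 V → NNReal}

lemma suppressWeight_pos (hN : G.neighborSet x = {↑a, ↑b}) (hnadj : ¬ G.Adj a b)
    (hw : ∀ e ∈ G.edgeSet, 0 < w e) :
    ∀ e ∈ (suppress G x a b).edgeSet, 0 < suppressWeight w x a b e := by
  have hxa : G.Adj x a := (adj_iff_of_neighborSet_eq hN).mpr (.inl rfl)
  have hxb : G.Adj x b := (adj_iff_of_neighborSet_eq hN).mpr (.inr rfl)
  rintro ⟨u, t⟩ h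
  rcases suppress_adj_iff.mp h with h' | ⟨hut, -⟩
  · rw [suppressWeight, if_neg (mk_ne_of_adj_of_not_adj hnadj h')]
    exact hw _ h'
  · rw [suppressWeight, if_pos hut]
    exact add_pos (hw _ hxa) (hw _ hxb)

lemma sum_suppressWeight_eq (hG : G.IsTree) (hN : G.neighborSet x = {↑a, ↑b})
    {u v : ({x}ᶜ : Set V)} {p : (suppress G x a b).Walk u v} {q : G.Walk u v}
    (hp : p.IsPath) (hq : q.IsPath) :
    (p.edges.map (suppressWeight w x a b)).sum = (q.edges.map w).sum := by
  have hnadj := not_adj_of_neighborSet_eq hG.isAcyclic hN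
  rw [← sum_unsuppressWalk hN hnadj,
    (hG.existsUnique_path u v).unique (isPath_unsuppressWalk hN hnadj hp) hq]

lemma isReduction_suppress_of_ne [Finite V] {r : V} (hG : G.IsTree) (hw : EquidistantWeight G r w)
    (hN : G.neighborSet x = {↑a, ↑b}) (hab : a ≠ b) (hr : r ≠ x) :
    IsReduction (.subtype _) (suppress G x a b) ⟨r, hr⟩ (suppressWeight w x a b) G r w := by
  have hnadj := not_adj_of_neighborSet_eq hG.isAcyclic hN
  have hout := outDeg_suppress_of_ne hG.isAcyclic hN hab hr
  obtain ⟨hpos, K, hK⟩ := hw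
  refine ⟨suppress_isTree hG hN, ⟨suppressWeight_pos hN hnadj hpos, K, fun u hu p hp => ?_⟩,
    hout, fun p q hp hq => sum_suppressWeight_eq hG hN hp hq⟩
  rw [← sum_unsuppressWalk hN hnadj]
  exact hK u (hout u ▸ hu) _ (isPath_unsuppressWalk hN hnadj hp)

lemma isReduction_suppress_self [Finite V] (hG : G.IsTree) (hw : EquidistantWeight G x w)
    {c : ({x}ᶜ : Set V)} (hN : G.neighborSet x = {↑c}) :
    IsReduction (.subtype _) (suppress G x c c) c (suppressWeight w x c c) G x w := by
  classical
  have hN' : G.neighborSet x = {↑c, ↑c} := by rw [Set.pair_eq_singleton, hN]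
  have hnadj := not_adj_of_neighborSet_eq hG.isAcyclic hN'
  have hxc : G.Adj x c := (adj_iff_of_neighborSet_eq hN').mpr (.inl rfl)
  have hout := outDeg_suppress_self hG.isAcyclic hN
  obtain ⟨hpos, K, hK⟩ := hw
  refine ⟨suppress_isTree hG hN', ⟨suppressWeight_pos hN' hnadj hpos, K - w s(x, c),
    fun u hu p hp => ?_⟩, hout, fun p q hp hq => sum_suppressWeight_eq hG hN' hp hq⟩
  have hx : x ∉ (unsuppressWalk hN' p).support := by
    rw [← List.count_eq_zero, count_support_unsuppressWalk hN' hnadj, List.count_eq_zero]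
    exact fun h => (suppress G x c c).loopless.irrefl c (p.adj_of_mem_edges h)
  have := hK u (hout u ▸ hu) (.cons hxc (unsuppressWalk hN' p))
    ((isPath_unsuppressWalk hN' hnadj hp).cons hx)
  rw [Walk.edges_cons, List.map_cons, List.sum_cons, sum_unsuppressWalk hN' hnadj] at this
  exact eq_tsub_of_add_eq (by rw [add_comm, this])

end SuppressReduction

namespace IsReduction

variable {U W W₂ : Type*} {G : SimpleGraph V} {r : V} {w : Sym2 V → NNReal}
  {G' : SimpleGraph W} {r' : W} {w' : Sym2 W → NNReal}

lemma refl (hG : G.IsTree) (hw : EquidistantWeight G r w) :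
    IsReduction (.refl V) G r w G r w :=
  ⟨hG, hw, fun _ => rfl, fun p q hp hq => by rw [(hG.existsUnique_path _ _).unique hp hq]; rfl⟩

lemma trans {f : W ↪ V} {g : U ↪ W} {G'' : SimpleGraph U} {r'' : U} {w'' : Sym2 U → NNReal}
    (h : IsReduction f G' r' w' G r w) (h' : IsReduction g G'' r'' w'' G' r' w') :
    IsReduction (g.trans f) G'' r'' w'' G r w where
  isTree := h'.isTree
  equidistantWeight := h'.equidistantWeight
  outDeg_eq v := (h'.outDeg_eq v).trans (h.outDeg_eq _)
  sum_eq {u v} p q hp hq := by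
    obtain ⟨p', hp'⟩ := h.isTree.connected.exists_isPath (g u) (g v)
    rw [h'.sum_eq p p' hp hp', h.sum_eq p' q hp' hq]; rfl

lemma ofIso {G₂ : SimpleGraph W₂} {r₂ : W₂} (φ : G₂ ≃g G') (hr : φ r₂ = r')
    (hG' : G'.IsTree) (hw' : EquidistantWeight G' r' w') :
    IsReduction φ.toEquiv.toEmbedding G₂ r₂ (fun e => w' (e.map φ)) G' r' w' := by
  subst hr
  have hsum : ∀ {u v : W₂} (p : G₂.Walk u v),
      ((p.map φ.toHom).edges.map w').sum = (p.edges.map fun e => w' (e.map φ)).sum := by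
    intro u v p
    rw [Walk.edges_map, List.map_map]
    rfl
  have hpath : ∀ {u v : W₂} {p : G₂.Walk u v}, p.IsPath → (p.map φ.toHom).IsPath :=
    fun hp => hp.map φ.injective
  obtain ⟨hpos, K, hK⟩ := hw'
  refine ⟨φ.isTree_iff.mpr hG', ⟨fun e he => hpos _ (φ.map_mem_edgeSet_iff.mpr he), K,
    fun u hu p hp => ?_⟩, outDeg_iso φ r₂, fun p q hp hq => ?_⟩
  · rw [← hsum]
    exact hK _ ((outDeg_iso φ r₂ u).symm.trans hu) _ (hpath hp)
  · rw [← hsum, (hG'.existsUnique_path _ _).unique (hpath hp) hq]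

lemma exists_subtype {f : W ↪ V} {S : Set V} (h : IsReduction f G' r' w' G r w)
    (hS : Set.range f = S) :
    ∃ (G₂ : SimpleGraph S) (r₂ : S) (w₂ : Sym2 S → NNReal),
      IsReduction (.subtype S) G₂ r₂ w₂ G r w := by
  subst hS
  let e := Equiv.ofInjective f f.injective
  let φ := (Iso.map e G').symm
  have hf : φ.toEquiv.toEmbedding.trans f = .subtype _ :=
    Function.Embedding.ext (Equiv.apply_ofInjective_symm f.injective)
  exact ⟨_, _, _,
    hf ▸ h.trans (ofIso φ (e.symm_apply_apply r') h.isTree h.equidistantWeight)⟩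

end IsReduction

section Induction

variable [Finite V] {G : SimpleGraph V} {r : V} {w : Sym2 V → NNReal}

lemma exists_isReduction_compl_singleton (hG : G.IsTree) (hw : EquidistantWeight G r w) {x : V}
    (hx : outDeg G r x = 1) :
    ∃ (G' : SimpleGraph ({x}ᶜ : Set V)) (r' : ({x}ᶜ : Set V))
      (w' : Sym2 ({x}ᶜ : Set V) → NNReal), IsReduction (.subtype _) G' r' w' G r w := by
  rw [outDeg, vdeg, Nat.card_coe_set_eq] at hx
  split_ifs at hx with hxr
  · subst hxr
    obtain ⟨c, hc⟩ := Set.ncard_eq_one.mp hx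
    have hcx : c ≠ x := (show G.Adj x c by rw [← mem_neighborSet, hc]; rfl).ne'
    exact ⟨_, _, _, isReduction_suppress_self hG hw (c := ⟨c, hcx⟩) hc⟩
  · obtain ⟨a, b, hab, hN⟩ := Set.ncard_eq_two.mp (by omega : (G.neighborSet x).ncard = 2)
    have hax : a ≠ x := (show G.Adj x a by rw [← mem_neighborSet, hN]; simp).ne'
    have hbx : b ≠ x := (show G.Adj x b by rw [← mem_neighborSet, hN]; simp).ne'
    exact ⟨_, _, _, isReduction_suppress_of_ne hG hw (a := ⟨a, hax⟩) (b := ⟨b, hbx⟩) hN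
      (fun h => hab (congrArg Subtype.val h)) (Ne.symm hxr)⟩

theorem exists_isReduction_subtype_outDeg_ne_one (hG : G.IsTree) (hw : EquidistantWeight G r w) :
    ∃ (G' : SimpleGraph {v | outDeg G r v ≠ 1}) (r' : {v | outDeg G r v ≠ 1})
      (w' : Sym2 {v | outDeg G r v ≠ 1} → NNReal), IsReduction (.subtype _) G' r' w' G r w := by
  induction hn : Nat.card V using Nat.strong_induction_on generalizing V with
  | _ n ih =>
    by_cases h : ∃ x, outDeg G r x = 1
    · obtain ⟨x, hx⟩ := h
      obtain ⟨G₂, r₂, w₂, h₂⟩ := exists_isReduction_compl_singleton hG hw hx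
      have hlt : Nat.card ({x}ᶜ : Set V) < n := by
        rw [← hn, Nat.card_coe_set_eq]
        exact Set.ncard_lt_card (by simp)
      obtain ⟨G₃, r₃, w₃, h₃⟩ := ih _ hlt h₂.isTree h₂.equidistantWeight rfl
      refine (h₂.trans h₃).exists_subtype ?_
      ext y
      constructor
      · rintro ⟨⟨v, hv⟩, rfl⟩
        exact (h₂.outDeg_eq v).symm.trans_ne hv
      · intro hy
        have hyx : y ≠ x := by rintro rfl; exact hy hx
        exact ⟨⟨⟨y, hyx⟩, (h₂.outDeg_eq _).trans_ne hy⟩, rfl⟩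
    · push Not at h
      exact (IsReduction.refl hG hw).exists_subtype (by ext; simp [h])

end Induction

theorem stmt13_exists_nabla_tree_general
    {V : Type*} [Fintype V] (G : SimpleGraph V) (hG : G.IsTree) (r : V)
    (w : Sym2 V → NNReal) (hw : EquidistantWeight G r w)
    (d : V → V → NNReal)
    (hd : ∀ u v, ∀ p : G.Walk u v, p.IsPath → d u v = (p.edges.map w).sum) :
    ∃ (S : Set V) (G' : SimpleGraph S) (r' : S) (w' : Sym2 S → NNReal),
      G'.IsTree ∧ EquidistantWeight G' r' w' ∧
      (∀ v' : S, outDeg G' r' v' ≠ 1) ∧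
      (Subtype.val '' {v' : S | outDeg G' r' v' = 0} = {v : V | outDeg G r v = 0}) ∧
      Nat.card S + Nat.card {v : V | outDeg G r v = 1} = Nat.card V ∧
      ∀ u v : S, outDeg G r u.val = 0 → outDeg G r v.val = 0 →
        ∀ p : G'.Walk u v, p.IsPath → (p.edges.map w').sum = d u.val v.val := by
  obtain ⟨G', r', w', h⟩ := exists_isReduction_subtype_outDeg_ne_one hG hw
  refine ⟨_, G', r', w', h.isTree, h.equidistantWeight, fun v => (h.outDeg_eq v).trans_ne v.2,
    ?_, ?_, fun u v _ _ p hp => ?_⟩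
  · ext y
    refine ⟨?_, fun hy => ⟨⟨y, by simp_all⟩, (h.outDeg_eq _).trans hy, rfl⟩⟩
    rintro ⟨v, hv, rfl⟩
    exact (h.outDeg_eq v).symm.trans hv
  · rw [Nat.card_coe_set_eq, Nat.card_coe_set_eq]
    exact Set.ncard_compl_add_ncard {v : V | outDeg G r v = 1}
  · obtain ⟨q, hq⟩ := hG.connected.exists_isPath u v
    rw [h.sum_eq p q hp hq, hd u v q hq]
    rfl

/-- Every equidistant tree `T(r, w)` having a vertex of out-degree `≥ 2`
can be replaced by an equidistant tree `T^∇(r^∇, w^∇)` without vertices of out-degree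
one, with the same `V₀⁺`, with `V(T^∇) ⊆ V(T)`, with
`|V(T^∇)| + |V₁⁺(T)| = |V(T)|`, and inducing the same metric on `V₀⁺`. -/
theorem stmt13_exists_nabla_tree
    {V : Type*} [Fintype V] (G : SimpleGraph V) (hG : G.IsTree) (r : V)
    (w : Sym2 V → NNReal) (hw : EquidistantWeight G r w)
    (d : V → V → NNReal)
    (hd : ∀ u v, ∀ p : G.Walk u v, p.IsPath → d u v = (p.edges.map w).sum)
    (hbranch : ∃ v : V, 2 ≤ outDeg G r v) :
    ∃ (S : Set V) (G' : SimpleGraph S) (r' : S) (w' : Sym2 S → NNReal),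
      G'.IsTree ∧ EquidistantWeight G' r' w' ∧
      (∀ v' : S, outDeg G' r' v' ≠ 1) ∧
      (Subtype.val '' {v' : S | outDeg G' r' v' = 0} = {v : V | outDeg G r v = 0}) ∧
      Nat.card S + Nat.card {v : V | outDeg G r v = 1} = Nat.card V ∧
      ∀ u v : S, outDeg G r u.val = 0 → outDeg G r v.val = 0 →
        ∀ p : G'.Walk u v, p.IsPath → (p.edges.map w').sum = d u.val v.val :=
  stmt13_exists_nabla_tree_general G hG r w hw d hd
end
end

section
/- Let T be a tree with strictly positive weight w such that |V(T)| ≥ 2, let L be the set of leaves of T, and suppose the restriction ρ of the additive metric d_w to L × L is an ultrametric on L. Then the following are equivalent: (1) there is r ∈ L such that the weighted rooted tree T(r,w) is equidistant; (2) there are c ∈ L and t > 0 such that L = {x ∈ L : ρ(x,c) = t} ∪ {c}; (3) there is r ∈ V(T) such that T(r,w) is planted and equidistant. -/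
/-!
In a tree with at least two vertices every vertex has degree at least one, so the leaves are
the vertices of degree one, and a root has out-degree one exactly when it is a leaf: this makes
(1) and (3) the same condition. For a leaf root `r` the vertices of out-degree zero are the
other leaves, and the weight of the path from `r` to a leaf `u` is `d u r`. Hence `T(r, w)` is
equidistant with constant `K` exactly when all other leaves lie at distance `K` from `r`, and
`K > 0` because a nontrivial tree has a second leaf.
-/

open SimpleGraph

noncomputable section

variable {V : Type*}

variable {G : SimpleGraph V}

lemma vdeg_eq_degree (v : V) [Fintype (G.neighborSet v)] : vdeg G v = G.degree v := by
  rw [vdeg, ← card_neighborSet_eq_degree, Nat.card_eq_fintype_card]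

lemma outDeg_self (r : V) : outDeg G r r = vdeg G r := by
  simp [outDeg]

lemma SimpleGraph.Preconnected.one_le_vdeg [Finite V] [Nontrivial V] (hG : G.Preconnected)
    (v : V) : 1 ≤ vdeg G v := by
  obtain ⟨u, hu⟩ := hG.exists_adj_of_nontrivial v
  have : Nonempty (G.neighborSet v) := ⟨⟨u, hu⟩⟩
  exact Nat.card_pos

lemma SimpleGraph.Preconnected.vdeg_le_one_iff [Finite V] [Nontrivial V] (hG : G.Preconnected)
    (v : V) :
    vdeg G v ≤ 1 ↔ vdeg G v = 1 := by
  have := hG.one_le_vdeg v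
  omega

lemma outDeg_eq_zero_iff [Finite V] [Nontrivial V] (hG : G.Preconnected) {r : V}
    (hr : vdeg G r = 1) (u : V) : outDeg G r u = 0 ↔ u ≠ r ∧ vdeg G u = 1 := by
  have := hG.one_le_vdeg u
  by_cases hu : u = r
  · subst hu
    simp [outDeg, hr]
  · simp only [outDeg, hu, if_false, ne_eq, not_false_eq_true, true_and]
    omega

lemma SimpleGraph.IsTree.exists_ne_vdeg_eq_one [Finite V] [Nontrivial V] (hG : G.IsTree)
    (r : V) : ∃ u, u ≠ r ∧ vdeg G u = 1 := by
  classical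
  have := Fintype.ofFinite V
  obtain ⟨u, v, huv, hu, hv⟩ := hG.exists_ne_and_degree_eq_one
  rw [← vdeg_eq_degree] at hu hv
  by_cases hur : u = r
  · exact ⟨v, hur ▸ huv.symm, hv⟩
  · exact ⟨u, hur, hu⟩

lemma Set.eq_sep_union_singleton_iff {α : Type*} {L : Set α} {c : α} (hc : c ∈ L)
    (P : α → Prop) : L = {x ∈ L | P x} ∪ {c} ↔ ∀ x ∈ L, x ≠ c → P x := by
  constructor
  · intro h x hx hxc
    rw [h] at hx
    rcases hx with ⟨-, hPx⟩ | rfl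
    · exact hPx
    · exact absurd rfl hxc
  · intro h
    ext x
    by_cases hxc : x = c
    · subst hxc
      simp [hc]
    · simp only [Set.mem_union, Set.mem_ofPred_eq, Set.mem_singleton_iff, hxc, or_false]
      exact ⟨fun hx => ⟨hx, h x hx hxc⟩, And.left⟩

lemma SimpleGraph.Walk.sum_map_edges_reverse (w : Sym2 V → NNReal) {u v : V} (p : G.Walk u v) :
    (p.reverse.edges.map w).sum = (p.edges.map w).sum := by
  rw [Walk.edges_reverse, List.map_reverse, List.sum_reverse]

lemma SimpleGraph.Walk.sum_map_edges_pos {w : Sym2 V → NNReal} (hw : ∀ e ∈ G.edgeSet, 0 < w e)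
    {u v : V} (huv : u ≠ v) (p : G.Walk u v) : 0 < (p.edges.map w).sum := by
  cases p with
  | nil => exact absurd rfl huv
  | cons h q =>
    rw [Walk.edges_cons, List.map_cons, List.sum_cons]
    exact lt_add_of_pos_of_le (hw _ h) zero_le

lemma equidistantWeight_iff [Finite V] [Nontrivial V] (hG : G.IsTree) {w : Sym2 V → NNReal}
    (hw : ∀ e ∈ G.edgeSet, 0 < w e) {d : V → V → NNReal}
    (hd : ∀ u v, ∀ p : G.Walk u v, p.IsPath → d u v = (p.edges.map w).sum)
    {r : V} (hr : vdeg G r = 1) :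
    EquidistantWeight G r w ↔ ∃ t, 0 < t ∧ ∀ x, vdeg G x = 1 → x ≠ r → d x r = t := by
  have hdist : ∀ u (p : G.Walk r u), p.IsPath → d u r = (p.edges.map w).sum := fun u p hp =>
    (hd u r p.reverse hp.reverse).trans (p.sum_map_edges_reverse w)
  have hleaf := outDeg_eq_zero_iff hG.connected.preconnected hr
  constructor
  · rintro ⟨-, K, hK⟩
    have hdK : ∀ x, vdeg G x = 1 → x ≠ r → d x r = K := fun x hx hxr => by
      obtain ⟨p, hp⟩ := hG.connected.exists_isPath r x
      rw [hdist x p hp, hK x ((hleaf x).2 ⟨hxr, hx⟩) p hp]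
    obtain ⟨u, hur, hu⟩ := hG.exists_ne_vdeg_eq_one r
    obtain ⟨p, hp⟩ := hG.connected.exists_isPath u r
    refine ⟨K, ?_, hdK⟩
    rw [← hdK u hu hur, hd u r p hp]
    exact p.sum_map_edges_pos hw hur
  · rintro ⟨t, -, ht⟩
    refine ⟨hw, t, fun u hu p hp => ?_⟩
    obtain ⟨hur, hu1⟩ := (hleaf u).1 hu
    rw [← hdist u p hp, ht u hu1 hur]

theorem stmt16_sphere_with_added_center_general
    {V : Type*} [Fintype V] (G : SimpleGraph V) (hG : G.IsTree)
    (hcard : 2 ≤ Nat.card V)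
    (w : Sym2 V → NNReal) (hw : ∀ e ∈ G.edgeSet, 0 < w e)
    (d : V → V → NNReal)
    (hd : ∀ u v, ∀ p : G.Walk u v, p.IsPath → d u v = (p.edges.map w).sum)
    (L : Set V) (hL : L = {v | vdeg G v ≤ 1}) :
    ((∃ r ∈ L, EquidistantWeight G r w) ↔
      (∃ c ∈ L, ∃ t : NNReal, 0 < t ∧ L = {x ∈ L | d x c = t} ∪ {c})) ∧
    ((∃ c ∈ L, ∃ t : NNReal, 0 < t ∧ L = {x ∈ L | d x c = t} ∪ {c}) ↔
      (∃ r : V, outDeg G r r = 1 ∧ EquidistantWeight G r w)) := by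
  have : Nontrivial V := Finite.one_lt_card_iff_nontrivial.mp hcard
  have hleaves : L = {v | vdeg G v = 1} := by
    ext v
    rw [hL]
    exact hG.connected.preconnected.vdeg_le_one_iff v
  have hsphere : (∃ r ∈ L, EquidistantWeight G r w) ↔
      (∃ c ∈ L, ∃ t : NNReal, 0 < t ∧ L = {x ∈ L | d x c = t} ∪ {c}) := by
    refine exists_congr fun r => and_congr_right fun hr => ?_
    rw [hleaves] at hr ⊢
    rw [equidistantWeight_iff hG hw hd hr]
    exact exists_congr fun t => and_congr_right fun _ =>
      (Set.eq_sep_union_singleton_iff hr _).symm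
  refine ⟨hsphere, hsphere.symm.trans (exists_congr fun r => ?_)⟩
  rw [outDeg_self, hleaves]
  rfl

/-- Let `T(w)` be a weighted tree with `|V(T)| ≥ 2` and strictly positive
weight, `L` its set of leaves, and suppose `d_w` restricted to `L` is an ultrametric.
TFAE: (1) there is `r ∈ L` with `T(r, w)` equidistant; (2) `(L, ρ)` is a sphere with an
added center; (3) there is `r ∈ V(T)` with `T(r, w)` planted and equidistant. -/
theorem stmt16_sphere_with_added_center
    {V : Type*} [Fintype V] (G : SimpleGraph V) (hG : G.IsTree)
    (hcard : 2 ≤ Nat.card V)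
    (w : Sym2 V → NNReal) (hw : ∀ e ∈ G.edgeSet, 0 < w e)
    (d : V → V → NNReal)
    (hd : ∀ u v, ∀ p : G.Walk u v, p.IsPath → d u v = (p.edges.map w).sum)
    (L : Set V) (hL : L = {v | vdeg G v ≤ 1})
    (hultra : IsUltrametricOn d L) :
    ((∃ r ∈ L, EquidistantWeight G r w) ↔
      (∃ c ∈ L, ∃ t : NNReal, 0 < t ∧ L = {x ∈ L | d x c = t} ∪ {c})) ∧
    ((∃ c ∈ L, ∃ t : NNReal, 0 < t ∧ L = {x ∈ L | d x c = t} ∪ {c}) ↔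
      (∃ r : V, outDeg G r r = 1 ∧ EquidistantWeight G r w)) :=
  stmt16_sphere_with_added_center_general G hG hcard w hw d hd L hL
end
end

section
/- Let T be a nonempty tree. Then the following are equivalent: (1) T is a star; (2) there is a strictly positive weight w : E(T) → ℝ≥0 such that the weighted rooted tree T(r,w) is equidistant for every choice of root r ∈ V(T). -/
open SimpleGraph

noncomputable section

variable {V : Type*}

/-!
In a star with at least one edge the unit weight works: from any root, all leaves of the rooted
tree lie at the same number of edges, one or two (through the centre). Conversely, suppose the
edge `uv` has no leaf endpoint. Growing a path maximally from `u` away from `v`, and from `v`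
away from `u`, ends in leaves `x` and `y`; equidistance at the roots `u` and `v` gives
`d(u, x) = w(uv) + d(v, y)` and `d(v, y) = w(uv) + d(u, x)`, so `w(uv) = 0`. Hence every edge
has a leaf endpoint, and a connected graph with this property is a star.
-/

variable {G : SimpleGraph V}

lemma vdeg_eq_one_iff {x : V} : vdeg G x = 1 ↔ ∃ y, G.neighborSet x = {y} := by
  rw [vdeg, Nat.card_coe_set_eq, Set.ncard_eq_one]

lemma eq_of_vdeg_eq_one {x y z : V} (hx : vdeg G x = 1) (hy : G.Adj x y) (hz : G.Adj x z) :
    y = z := by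
  obtain ⟨a, ha⟩ := vdeg_eq_one_iff.mp hx
  have hy' : y ∈ G.neighborSet x := hy
  have hz' : z ∈ G.neighborSet x := hz
  rw [ha] at hy' hz'
  exact hy'.trans hz'.symm

lemma vdeg_ne_zero [Finite V] {x y : V} (h : G.Adj x y) : vdeg G x ≠ 0 :=
  have : Nonempty (G.neighborSet x) := ⟨⟨y, h⟩⟩
  Nat.card_pos.ne'

lemma outDeg_eq_zero_of_vdeg_eq_one {r x : V} (hx : x ≠ r) (h : vdeg G x = 1) :
    outDeg G r x = 0 := by
  rw [outDeg, if_neg hx, h]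

namespace SimpleGraph

open Walk

lemma eq_starGraph_iff {c : V} :
    G = starGraph c ↔ (∀ v, v ≠ c → G.Adj c v) ∧ ∀ u v, G.Adj u v → u = c ∨ v = c := by
  constructor
  · rintro rfl
    exact ⟨fun v hv => starGraph_center_adj hv.symm, fun u v huv => (starGraph_adj.mp huv).2⟩
  · rintro ⟨hcenter, hedge⟩
    ext u v
    rw [starGraph_adj]
    refine ⟨fun huv => ⟨huv.ne, hedge u v huv⟩, ?_⟩
    rintro ⟨hne, rfl | rfl⟩
    exacts [hcenter v hne.symm, (hcenter u hne).symm]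

lemma IsAcyclic.length_eq_of_isPath (hG : G.IsAcyclic) {u v : V} {p q : G.Walk u v}
    (hp : p.IsPath) (hq : q.IsPath) : p.length = q.length :=
  congrArg (fun s : G.Path u v => s.1.length) ((hG.subsingleton_path u v).elim ⟨p, hp⟩ ⟨q, hq⟩)

lemma IsAcyclic.length_eq_one_of_adj (hG : G.IsAcyclic) {u v : V} {p : G.Walk u v}
    (hp : p.IsPath) (h : G.Adj u v) : p.length = 1 :=
  hG.length_eq_of_isPath hp (Path.singleton h).2

lemma IsAcyclic.length_eq_two_of_adj_of_adj (hG : G.IsAcyclic) {u x v : V} {p : G.Walk u v}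
    (hp : p.IsPath) (hux : G.Adj u x) (hxv : G.Adj x v) (huv : u ≠ v) : p.length = 2 :=
  hG.length_eq_of_isPath hp (q := cons hux (cons hxv nil)) (by simp [hux.ne, hxv.ne, huv])

lemma IsAcyclic.neighborSet_eq_penultimate (hG : G.IsAcyclic) {u x : V} {p : G.Walk u x}
    (hp : p.IsPath) (hnil : ¬p.Nil) (hmax : ∀ z, G.Adj x z → z ∈ p.support) :
    G.neighborSet x = {p.penultimate} :=
  Set.ext fun z => ⟨fun hz => hG.eq_penultimate_of_adj_end hp hz (hmax z hz),
    fun hz => hz ▸ (p.adj_penultimate hnil).symm⟩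

lemma Walk.IsPath.exists_maximal_extension [Fintype V] {a b : V} {p : G.Walk a b}
    (hp : p.IsPath) : ∃ (x : V) (q : G.Walk b x),
      (p.append q).IsPath ∧ ∀ z, G.Adj x z → z ∈ (p.append q).support := by
  by_cases hmax : ∀ z, G.Adj b z → z ∈ p.support
  · exact ⟨b, .nil, by simpa using hp, by simpa using hmax⟩
  push Not at hmax
  obtain ⟨z, hbz, hz⟩ := hmax
  obtain ⟨x, q, hq, hqmax⟩ := (hp.concat hz hbz).exists_maximal_extension
  rw [concat_append] at hq hqmax
  exact ⟨x, cons hbz q, hq, hqmax⟩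
termination_by Fintype.card V - p.length
decreasing_by
  have := (hp.concat hz hbz).length_lt
  rw [length_concat] at this ⊢
  omega

lemma IsAcyclic.exists_isPath_to_leaf_of_adj [Fintype V] (hG : G.IsAcyclic) {u v : V}
    (huv : G.Adj v u) :
    ∃ (x : V) (q : G.Walk u x), q.IsPath ∧ v ∉ q.support ∧ vdeg G x = 1 := by
  have hedge : (cons huv nil).IsPath := by simpa using huv.ne
  obtain ⟨x, q, hq, hmax⟩ := hedge.exists_maximal_extension
  rw [cons_append, nil_append] at hq hmax
  exact ⟨x, q, hq.of_cons, ((cons_isPath_iff _ _).mp hq).2, vdeg_eq_one_iff.mpr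
    ⟨_, hG.neighborSet_eq_penultimate hq not_nil_cons hmax⟩⟩

lemma vdeg_eq_one_or_of_equidistantWeight [Fintype V] (hG : G.IsAcyclic) {w : Sym2 V → NNReal}
    {u v : V} (huv : G.Adj u v) (hu : EquidistantWeight G u w) (hv : EquidistantWeight G v w) :
    vdeg G u = 1 ∨ vdeg G v = 1 := by
  by_contra! hdeg
  obtain ⟨x, p, hp, hvp, hx⟩ := hG.exists_isPath_to_leaf_of_adj huv.symm
  obtain ⟨y, q, hq, huq, hy⟩ := hG.exists_isPath_to_leaf_of_adj huv
  obtain ⟨hwpos, K, hK⟩ := hu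
  obtain ⟨-, K', hK'⟩ := hv
  have hxu : x ≠ u := fun h => hdeg.1 (h ▸ hx)
  have hyv : y ≠ v := fun h => hdeg.2 (h ▸ hy)
  have hxv : x ≠ v := fun h => hvp (h ▸ p.end_mem_support)
  have hyu : y ≠ u := fun h => huq (h ▸ q.end_mem_support)
  have hpu := hK x (outDeg_eq_zero_of_vdeg_eq_one hxu hx) p hp
  have hqu := hK y (outDeg_eq_zero_of_vdeg_eq_one hyu hy) _ (hq.cons huq (h := huv))
  have hqv := hK' y (outDeg_eq_zero_of_vdeg_eq_one hyv hy) q hq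
  have hpv := hK' x (outDeg_eq_zero_of_vdeg_eq_one hxv hx) _ (hp.cons hvp (h := huv.symm))
  rw [edges_cons, List.map_cons, List.sum_cons] at hqu hpv
  rw [Sym2.eq_swap] at hpv
  have hcycle : w s(u, v) + (w s(u, v) + (p.edges.map w).sum) = (p.edges.map w).sum := by
    rw [hpv, ← hqv, hqu, hpu]
  rw [← add_assoc, add_eq_right, add_self_eq_zero] at hcycle
  exact (hwpos _ huv).ne' hcycle

lemma eq_starGraph_of_forall_adj_vdeg_eq_one (hconn : G.Preconnected) {c : V}
    (hleaf : ∀ y, G.Adj c y → vdeg G y = 1) : G = starGraph c := by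
  have hcenter (x : V) (p : G.Walk x c) : x = c ∨ G.Adj c x := by
    induction p with
    | nil => exact .inl rfl
    | @cons x y _ hxy p ih =>
      rcases ih hleaf with rfl | hcy
      · exact .inr hxy.symm
      · exact .inl (eq_of_vdeg_eq_one (hleaf y hcy) hxy.symm hcy.symm)
  refine eq_starGraph_iff.mpr ⟨fun x hx => ((hcenter x (hconn x c).some).resolve_left hx), ?_⟩
  intro u v huv
  by_contra! hne
  have hcu := (hcenter u (hconn u c).some).resolve_left hne.1
  exact hne.2 (eq_of_vdeg_eq_one (hleaf u hcu) huv hcu.symm)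

lemma exists_eq_starGraph_of_adj (hconn : G.Preconnected)
    (hleaf : ∀ u v, G.Adj u v → vdeg G u = 1 ∨ vdeg G v = 1) {a b : V} (hab : G.Adj a b) :
    ∃ c, G = starGraph c := by
  wlog hb : vdeg G b = 1 generalizing a b
  · exact this hab.symm ((hleaf a b hab).resolve_right hb)
  refine ⟨a, eq_starGraph_of_forall_adj_vdeg_eq_one hconn fun y hay => ?_⟩
  by_cases ha : vdeg G a = 1
  · exact eq_of_vdeg_eq_one ha hab hay ▸ hb
  · exact (hleaf a y hay).resolve_left ha

lemma equidistantWeight_one_starGraph [Finite V] {c d : V} (hd : d ≠ c) (r : V) :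
    EquidistantWeight (starGraph c) r (fun _ => 1) := by
  have hacyc := isAcyclic_starGraph c
  refine ⟨fun _ _ => one_pos, ?_⟩
  simp only [List.map_const', List.sum_replicate, length_edges, nsmul_one]
  have hcd : (starGraph c).Adj c d := starGraph_center_adj hd.symm
  have hne_root (u : V) (hu : outDeg (starGraph c) r u = 0) : u ≠ r := by
    intro hur
    rw [hur, outDeg, if_pos rfl] at hu
    by_cases hrc : r = c
    · rw [hrc] at hu
      exact vdeg_ne_zero hcd hu
    · exact vdeg_ne_zero (starGraph_center_adj' (Ne.symm hrc)) hu
  by_cases hrc : r = c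
  · subst hrc
    exact ⟨1, fun u hu p hp => by
      rw [hacyc.length_eq_one_of_adj hp (starGraph_center_adj (hne_root u hu).symm), Nat.cast_one]⟩
  have hcr : (starGraph c).Adj c r := starGraph_center_adj (Ne.symm hrc)
  by_cases hc : vdeg (starGraph c) c = 1
  · -- the centre is a leaf only when the star is the single edge `rc`
    refine ⟨1, fun u hu p hp => ?_⟩
    obtain rfl : u = c := by
      by_contra huc
      exact hne_root u hu (eq_of_vdeg_eq_one hc (starGraph_center_adj (Ne.symm huc)) hcr)
    rw [hacyc.length_eq_one_of_adj hp hcr.symm, Nat.cast_one]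
  · refine ⟨2, fun u hu p hp => ?_⟩
    have huc : u ≠ c := by
      intro huc
      rw [huc, outDeg, if_neg (Ne.symm hrc)] at hu
      have := vdeg_ne_zero hcd
      omega
    rw [hacyc.length_eq_two_of_adj_of_adj hp hcr.symm (starGraph_center_adj (Ne.symm huc))
      (hne_root u hu).symm, Nat.cast_ofNat]

end SimpleGraph

/-- A nonempty tree `T` is a star if and only if there is a strictly
positive weight `w` on `E(T)` such that `T(r, w)` is equidistant for every choice of
the root `r ∈ V(T)`. -/
theorem stmt18_star_iff_equidistant_for_every_root
    {V : Type*} [Fintype V] (G : SimpleGraph V) (hG : G.IsTree)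
    (hE : G.edgeSet.Nonempty) :
    (∃ c : V, (∀ v, v ≠ c → G.Adj c v) ∧ ∀ u v, G.Adj u v → u = c ∨ v = c) ↔
      (∃ w : Sym2 V → NNReal, (∀ e ∈ G.edgeSet, 0 < w e) ∧
        ∀ r : V, EquidistantWeight G r w) := by
  obtain ⟨a, b, hab⟩ := ne_bot_iff_exists_adj.mp (edgeSet_nonempty.mp hE)
  simp only [← eq_starGraph_iff]
  constructor
  · rintro ⟨c, rfl⟩
    obtain ⟨d, hd⟩ : ∃ d, d ≠ c := by
      by_contra! h
      exact hab.ne ((h a).trans (h b).symm)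
    exact ⟨fun _ => 1, fun _ _ => one_pos, equidistantWeight_one_starGraph hd⟩
  · rintro ⟨w, -, hw⟩
    exact exists_eq_starGraph_of_adj hG.connected.preconnected
      (fun u v huv => vdeg_eq_one_or_of_equidistantWeight hG.isAcyclic huv (hw u) (hw v)) hab
end
end

section
/- Let T1(r1, l1) and T2(r2, l2) be labeled rooted trees such that for every vertex u of T_i one has δ⁺(u) ≠ 1 and (δ⁺(u) = 0 ⇔ l_i(u) = 0), and l_i(v) < l_i(u) holds whenever v is a direct successor of u, for i = 1, 2. Then: (a) the labeled trees T1(l1) and T2(l2) are isomorphic (as labeled, unrooted trees) if and only if the ultrametric spaces (V(T1), d_{l1}) and (V(T2), d_{l2}) are isometric; (b) if (V(T1), d_{l1}) and (V(T2), d_{l2}) are isometric, then the following are equivalent: (i) |V(T1)| = |V(T2)| = 1; (ii) every isometry f : V(T1) → V(T2) of (V(T1), d_{l1}) and (V(T2), d_{l2}) is an isomorphism of the labeled trees T1(l1) and T2(l2). -/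
open SimpleGraph

noncomputable section

variable {V : Type*}

/-!
In a monotone labeled rooted tree, `d_l(x, y)` is the label of the meet of `x` and `y`. So for
`x ≠ y`, `d_l(x, y) = l(x)` says exactly that `x` is a proper ancestor of `y`, and the parent of
`y` is its proper ancestor of least label: an isometry that also preserves labels preserves
adjacency. The metric determines the labels only up to exchanging a leaf with its parent: the two
are equidistant from every other vertex, so swapping them is an isometry. Correcting an arbitrary
isometry by such swaps, one label mismatch at a time, gives a label-preserving isometry, whence
(a); and as soon as there are two vertices, composing an isometry with such a swap breaks label
preservation, whence (b).
-/

open Walk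

def IsLabelDist (G : SimpleGraph V) (l : V → NNReal) (d : V → V → NNReal) : Prop :=
  (∀ u, d u u = 0) ∧
    ∀ u v, u ≠ v → ∀ p : G.Walk u v, p.IsPath → d u v = (p.support.map l).foldr max 0

def IsDistIsometry {V₁ V₂ : Type*} (d₁ : V₁ → V₁ → NNReal) (d₂ : V₂ → V₂ → NNReal)
    (f : V₁ → V₂) : Prop :=
  Function.Bijective f ∧ ∀ x y, d₂ (f x) (f y) = d₁ x y

namespace IsLabelDist

variable {G : SimpleGraph V} {l : V → NNReal} {d : V → V → NNReal} {x y z p : V}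

lemma label_le_of_mem_support (hd : IsLabelDist G l d) (hxy : x ≠ y) {q : G.Walk x y}
    (hq : q.IsPath) (hz : z ∈ q.support) : l z ≤ d x y :=
  hd.2 x y hxy q hq ▸ List.le_max_of_le' 0 (List.mem_map_of_mem hz) le_rfl

lemma le_of_walk (hd : IsLabelDist G l d) (p : G.Walk x y) {b : NNReal}
    (hb : ∀ z ∈ p.support, l z ≤ b) : d x y ≤ b := by
  classical
  obtain rfl | hxy := eq_or_ne x y
  · simp [hd.1]
  rw [hd.2 x y hxy _ p.bypass_isPath]
  simpa using List.max_le_of_forall_le _ b fun a ha => by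
    obtain ⟨z, hz, rfl⟩ := List.mem_map.1 ha
    exact hb z (p.support_bypass_subset_support hz)

lemma label_le_dist (hd : IsLabelDist G l d) (hG : G.Connected) (hxy : x ≠ y) :
    l x ≤ d x y :=
  have ⟨_, hp⟩ := (hG x y).exists_isPath
  hd.label_le_of_mem_support hxy hp (start_mem_support _)

lemma comm (hd : IsLabelDist G l d) (hG : G.Connected) (x y : V) : d x y = d y x := by
  obtain rfl | hxy := eq_or_ne x y
  · rfl
  obtain ⟨p, hp⟩ := (hG x y).exists_isPath
  refine le_antisymm (hd.le_of_walk p fun z hz => ?_) (hd.le_of_walk p.reverse fun z hz => ?_)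
  · exact hd.label_le_of_mem_support hxy.symm hp.reverse (by simpa using hz)
  · exact hd.label_le_of_mem_support hxy hp (by simpa using hz)

lemma dist_eq_max_of_adj (hd : IsLabelDist G l d) (h : G.Adj x y) : d x y = max (l x) (l y) := by
  rw [hd.2 x y h.ne (cons h nil) (IsPath.nil.cons (by simpa using h.ne))]
  simp

lemma dist_eq_of_forall_adj_eq (hd : IsLabelDist G l d) (hG : G.Connected) (hz : l z = 0)
    (hzp : ∀ w, G.Adj z w → w = p) (hyz : y ≠ z) (hyp : y ≠ p) : d z y = d p y := by
  obtain ⟨q, hq⟩ := (hG z y).exists_isPath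
  obtain ⟨w, h, q', rfl⟩ := exists_eq_cons_of_ne hyz.symm q
  obtain rfl := hzp w h
  rw [hd.2 z y hyz.symm _ hq, hd.2 w y hyp.symm q' hq.of_cons]
  simp [hz]

lemma label_le_dist_of_forall_adj_eq (hd : IsLabelDist G l d) (hG : G.Connected) (hz : l z = 0)
    (hzp : G.Adj z p) (hzp' : ∀ w, G.Adj z w → w = p) (hyz : y ≠ z) : l p ≤ d z y := by
  obtain rfl | hyp := eq_or_ne y p
  · exact hd.dist_eq_max_of_adj hzp ▸ le_max_right _ _
  · exact hd.dist_eq_of_forall_adj_eq hG hz hzp' hyz hyp ▸ hd.label_le_dist hG hyp.symm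

lemma dist_swap_swap [DecidableEq V] (hd : IsLabelDist G l d) (hG : G.Connected)
    (htwin : ∀ y, y ≠ z → y ≠ p → d z y = d p y) (x y : V) :
    d (Equiv.swap z p x) (Equiv.swap z p y) = d x y := by
  have hsymm := hd.comm hG
  have key : ∀ x y, x ≠ z → x ≠ p → d (Equiv.swap z p x) (Equiv.swap z p y) = d x y := by
    intro x y hxz hxp
    rw [Equiv.swap_apply_of_ne_of_ne hxz hxp]
    obtain rfl | hyz := eq_or_ne y z
    · rw [Equiv.swap_apply_left, hsymm, ← htwin x hxz hxp, hsymm]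
    obtain rfl | hyp := eq_or_ne y p
    · rw [Equiv.swap_apply_right, hsymm, htwin x hxz hxp, hsymm]
    · rw [Equiv.swap_apply_of_ne_of_ne hyz hyp]
  by_cases hx : x ≠ z ∧ x ≠ p
  · exact key x y hx.1 hx.2
  by_cases hy : y ≠ z ∧ y ≠ p
  · rw [hsymm, key y x hy.1 hy.2, hsymm]
  simp only [not_and_or, not_not] at hx hy
  rcases hx with rfl | rfl <;> rcases hy with rfl | rfl <;>
    simp [hd.1, Equiv.swap_apply_left, Equiv.swap_apply_right, hsymm]

lemma dist_map {V₁ V₂ : Type*} {G₁ : SimpleGraph V₁} {G₂ : SimpleGraph V₂}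
    {l₁ : V₁ → NNReal} {l₂ : V₂ → NNReal} {d₁ : V₁ → V₁ → NNReal} {d₂ : V₂ → V₂ → NNReal}
    (hd₁ : IsLabelDist G₁ l₁ d₁) (hd₂ : IsLabelDist G₂ l₂ d₂) (hG₁ : G₁.Connected)
    (f : G₁ ≃g G₂) (hl : ∀ v, l₂ (f v) = l₁ v) (x y : V₁) : d₂ (f x) (f y) = d₁ x y := by
  obtain rfl | hxy := eq_or_ne x y
  · rw [hd₁.1, hd₂.1]
  obtain ⟨p, hp⟩ := (hG₁ x y).exists_isPath
  rw [hd₂.2 _ _ (f.injective.ne hxy) (p.map f.toHom)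
    ((isPath_map_iff_of_injective f.injective).2 hp), hd₁.2 x y hxy p hp, Walk.support_map,
    List.map_map]
  exact congrArg _ (List.map_congr_left fun v _ => hl v)

end IsLabelDist

namespace SimpleGraph.IsTree

variable {G : SimpleGraph V} (hG : G.IsTree) {r x y z : V}

def path (x y : V) : G.Walk x y := (hG.existsUnique_path x y).exists.choose

lemma isPath_path (x y : V) : (hG.path x y).IsPath :=
  (hG.existsUnique_path x y).exists.choose_spec

lemma eq_path {p : G.Walk x y} (hp : p.IsPath) : p = hG.path x y :=
  (hG.existsUnique_path x y).unique hp (hG.isPath_path x y)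

lemma exists_path_eq_cons (hx : x ≠ r) :
    ∃ (p : V) (h : G.Adj x p), hG.path x r = cons h (hG.path p r) := by
  obtain ⟨p, h, q, hq⟩ := exists_eq_cons_of_ne hx (hG.path x r)
  have hqp : q.IsPath := (hq ▸ hG.isPath_path x r).of_cons
  exact ⟨p, h, hq.trans (by rw [← hG.eq_path hqp])⟩

lemma path_eq_cons_of_mem (h : G.Adj x y) (hy : y ∈ (hG.path x r).support) :
    hG.path x r = cons h (hG.path y r) := by
  have := hG.isAcyclic.path_concat (hG.isPath_path y r).reverse (hG.isPath_path x r).reverse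
    h.symm (by simpa using hy)
  simpa using congrArg Walk.reverse this

lemma path_eq_cons_or_mem (h : G.Adj x y) :
    hG.path x r = cons h (hG.path y r) ∨ x ∈ (hG.path y r).support := by
  refine (em _).symm.imp (fun hx => hG.path_eq_cons_of_mem h ?_) id
  simpa using hG.isAcyclic.mem_support_of_ne_mem_support_of_adj_of_isPath
    (hG.isPath_path x r).reverse (hG.isPath_path y r).reverse h (by simpa using hx)

lemma support_path_subset (hz : z ∈ (hG.path y r).support) :
    (hG.path z r).support ⊆ (hG.path y r).support := by
  classical
  rw [← hG.eq_path ((hG.isPath_path y r).dropUntil hz)]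
  exact support_dropUntil_subset_support _ hz

lemma mem_path_of_walk (hx : x ∈ (hG.path y r).support) (q : G.Walk y z)
    (hxq : x ∉ q.support) : x ∈ (hG.path z r).support := by
  induction q with
  | nil => exact hx
  | @cons a b c h q ih =>
    simp only [support_cons, List.mem_cons, not_or] at hxq
    refine ih ?_ hxq.2
    rcases hG.path_eq_cons_or_mem (r := r) h with hc | ha
    · simpa [hc, hxq.1] using hx
    · exact hG.support_path_subset ha hx

end SimpleGraph.IsTree

section MonotoneLabeling

variable {G : SimpleGraph V} {r : V} {l : V → NNReal} {d : V → V → NNReal} {x y z : V}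

lemma label_lt_of_mem_support (hc : ∀ u v, DirectSucc G r u v → l v < l u) {p : G.Walk x r}
    (hp : p.IsPath) (hz : z ∈ p.support) (hzx : z ≠ x) : l x < l z := by
  suffices ∀ {y} (p : G.Walk x y), y = r → p.IsPath → z ∈ p.support → z ≠ x → l x < l z from
    this p rfl hp hz hzx
  clear hp hz hzx p
  intro y p
  induction p with
  | nil => intro _ _ hz hzx; simp_all
  | @cons a b c h q ih =>
    rintro rfl hp hz hzx
    have hab : l a < l b := hc b a ⟨h.symm, _, hp, by simp⟩
    obtain rfl | hzb := eq_or_ne z b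
    · exact hab
    · exact hab.trans (ih rfl hp.of_cons (by simpa [hzx] using hz) hzb)

/-- In a monotone labeled rooted tree this says that `x` is the proper ancestor of `y` of least
label, that is, the parent of `y` (see `adj_iff_isMetricParent`). -/
def IsMetricParent (d : V → V → NNReal) (l : V → NNReal) (x y : V) : Prop :=
  x ≠ y ∧ d x y = l x ∧ ∀ w, w ≠ y → d w y = l w → l x ≤ l w

variable (hG : G.IsTree) (hd : IsLabelDist G l d) (hc : ∀ u v, DirectSucc G r u v → l v < l u)
include hG hd hc

lemma mem_path_of_dist_eq_label (hxy : x ≠ y) (h : d x y = l x) :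
    x ∈ (hG.path y r).support := by
  obtain ⟨w, hxw, q, hq⟩ := exists_eq_cons_of_ne hxy (hG.path x y)
  have hp := hq ▸ hG.isPath_path x y
  have hwx : l w ≤ l x := h ▸ hd.label_le_of_mem_support hxy (hG.isPath_path x y) (by simp [hq])
  rcases hG.path_eq_cons_or_mem (r := r) hxw with hx | hx
  · have := hc w x ⟨hxw.symm, _, hG.isPath_path x r, by simp [hx]⟩
    exact absurd hwx (not_le.2 this)
  · exact hG.mem_path_of_walk hx q ((cons_isPath_iff _ _).1 hp).2

lemma label_lt_of_dist_eq_label (hxy : x ≠ y) (h : d x y = l x) : l y < l x :=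
  label_lt_of_mem_support hc (hG.isPath_path y r) (mem_path_of_dist_eq_label hG hd hc hxy h) hxy

lemma isMetricParent_of_mem_path (h : G.Adj x y) (hx : x ∈ (hG.path y r).support) :
    IsMetricParent d l x y := by
  have hlt : l y < l x := hc x y ⟨h, _, hG.isPath_path y r, hx⟩
  refine ⟨h.ne, by rw [hd.dist_eq_max_of_adj h, max_eq_left hlt.le], fun w hwy hw => ?_⟩
  have hw' := mem_path_of_dist_eq_label hG hd hc hwy hw
  rw [hG.path_eq_cons_of_mem h.symm hx] at hw'
  obtain rfl | hwx := eq_or_ne w x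
  · exact le_rfl
  · exact (label_lt_of_mem_support hc (hG.isPath_path x r) (by simpa [hwy] using hw') hwx).le

lemma adj_of_isMetricParent (h : IsMetricParent d l x y) : G.Adj x y := by
  obtain ⟨hxy, hdxy, hmin⟩ := h
  have hx := mem_path_of_dist_eq_label hG hd hc hxy hdxy
  have hyr : y ≠ r := by
    rintro rfl
    rw [← hG.eq_path IsPath.nil] at hx
    exact hxy (by simpa using hx)
  obtain ⟨p, hyp, hpath⟩ := hG.exists_path_eq_cons hyr
  have hlt : l y < l p := hc p y ⟨hyp.symm, _, hG.isPath_path y r, by simp [hpath]⟩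
  have hxp : l x ≤ l p :=
    hmin p hyp.ne' (by rw [hd.dist_eq_max_of_adj hyp.symm, max_eq_left hlt.le])
  rw [hpath] at hx
  obtain rfl | hne := eq_or_ne x p
  · exact hyp.symm
  · exact absurd hxp
      (not_le.2 (label_lt_of_mem_support hc (hG.isPath_path p r) (by simpa [hxy] using hx) hne))

theorem adj_iff_isMetricParent :
    G.Adj x y ↔ IsMetricParent d l x y ∨ IsMetricParent d l y x := by
  refine ⟨fun h => ?_, ?_⟩
  · rcases hG.path_eq_cons_or_mem (r := r) h with hx | hx
    · exact .inr (isMetricParent_of_mem_path hG hd hc h.symm (by simp [hx]))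
    · exact .inl (isMetricParent_of_mem_path hG hd hc h hx)
  · rintro (h | h)
    · exact adj_of_isMetricParent hG hd hc h
    · exact (adj_of_isMetricParent hG hd hc h).symm

end MonotoneLabeling

section Leaves

variable {G : SimpleGraph V} {r : V} {l : V → NNReal} {d : V → V → NNReal} {x y z p : V}

lemma exists_directSucc [Finite V] (hG : G.IsTree) (hl : MonotoneLabeling G r l)
    (hx : l x ≠ 0) : ∃ c, DirectSucc G r x c := by
  have hdeg : outDeg G r x ≠ 0 := fun h => hx ((hl.1 x).2 h)
  unfold outDeg vdeg at hdeg
  split_ifs at hdeg with hxr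
  · obtain ⟨⟨c, hc⟩⟩ := (Nat.card_ne_zero.1 hdeg).1
    exact ⟨c, hc, _, hG.isPath_path c r, hxr ▸ end_mem_support _⟩
  · obtain ⟨p, hxp, hpath⟩ := hG.exists_path_eq_cons hxr
    have : Nontrivial (G.neighborSet x) := Finite.one_lt_card_iff_nontrivial.1 (by omega)
    obtain ⟨⟨c, hc : G.Adj x c⟩, hcp⟩ := exists_ne (⟨p, hxp⟩ : G.neighborSet x)
    refine ⟨c, hc, _, hG.isPath_path c r, ?_⟩
    refine (hG.path_eq_cons_or_mem hc).resolve_left fun h => hcp (Subtype.ext ?_)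
    have := congrArg Walk.snd (h.symm.trans hpath)
    rwa [snd_cons, snd_cons] at this

lemma exists_unique_adj_of_label_eq_zero [Finite V] (hG : G.IsTree)
    (hl : MonotoneLabeling G r l) (hz : l z = 0) (hyz : y ≠ z) :
    ∃ p, G.Adj z p ∧ (∀ w, G.Adj z w → w = p) ∧ 0 < l p := by
  have hdeg := (hl.1 z).1 hz
  have hzr : z ≠ r := by
    rintro rfl
    obtain ⟨w, hw, -⟩ := exists_eq_cons_of_ne hyz.symm (hG.path z y)
    have : Nonempty (G.neighborSet z) := ⟨⟨w, hw⟩⟩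
    simp only [outDeg, vdeg, if_pos] at hdeg
    exact (Nat.card_pos.ne' hdeg).elim
  obtain ⟨p, hzp, hpath⟩ := hG.exists_path_eq_cons hzr
  have : Subsingleton (G.neighborSet z) := by
    rw [← Finite.card_le_one_iff_subsingleton]
    simp only [outDeg, vdeg, if_neg hzr] at hdeg
    omega
  refine ⟨p, hzp, fun w hw => congrArg Subtype.val
    (Subsingleton.elim (⟨w, hw⟩ : G.neighborSet z) ⟨p, hzp⟩), ?_⟩
  exact hz ▸ hl.2 p z ⟨hzp.symm, _, hG.isPath_path z r, by simp [hpath]⟩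

lemma exists_label_eq_zero [Finite V] [Nonempty V] (hG : G.IsTree)
    (hl : MonotoneLabeling G r l) : ∃ z, l z = 0 := by
  obtain ⟨z, -, hmin⟩ := Set.exists_min_image Set.univ l (Set.toFinite _) Set.univ_nonempty
  refine ⟨z, by_contra fun hz => ?_⟩
  obtain ⟨c, hc⟩ := exists_directSucc hG hl hz
  exact absurd (hmin c trivial) (not_le.2 (hl.2 z c hc))

end Leaves

structure IsLabeledTreeDist (G : SimpleGraph V) (r : V) (l : V → NNReal) (d : V → V → NNReal) :
    Prop where
  isTree : G.IsTree
  monotoneLabeling : MonotoneLabeling G r l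
  isLabelDist : IsLabelDist G l d

namespace IsLabeledTreeDist

variable {G : SimpleGraph V} {r : V} {l : V → NNReal} {d : V → V → NNReal} {x y z : V}
variable (h : IsLabeledTreeDist G r l d)
include h

lemma label_le_dist (hxy : x ≠ y) : l x ≤ d x y :=
  h.isLabelDist.label_le_dist h.isTree.connected hxy

lemma label_lt_of_dist_eq_label (hxy : x ≠ y) (hd : d x y = l x) : l y < l x :=
  _root_.label_lt_of_dist_eq_label h.isTree h.isLabelDist h.monotoneLabeling.2 hxy hd

lemma adj_iff_isMetricParent : G.Adj x y ↔ IsMetricParent d l x y ∨ IsMetricParent d l y x :=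
  _root_.adj_iff_isMetricParent h.isTree h.isLabelDist h.monotoneLabeling.2

lemma label_eq_zero [Subsingleton V] (v : V) : l v = 0 := by
  refine (h.monotoneLabeling.1 v).2 ?_
  have : IsEmpty (G.neighborSet v) := ⟨fun ⟨w, hw⟩ => hw.ne (Subsingleton.elim v w)⟩
  simp [outDeg, vdeg]

variable [Finite V]

lemma exists_dist_eq_label (hx : l x ≠ 0) : ∃ y, y ≠ x ∧ d x y = l x := by
  obtain ⟨c, hc⟩ := exists_directSucc h.isTree h.monotoneLabeling hx
  refine ⟨c, hc.1.ne', ?_⟩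
  rw [h.isLabelDist.dist_eq_max_of_adj hc.1, max_eq_left (h.monotoneLabeling.2 x c hc).le]

lemma exists_twin [DecidableEq V] (hz : l z = 0) (hyz : y ≠ z) :
    ∃ p, 0 < l p ∧ d z p = l p ∧ (∀ w, w ≠ z → l p ≤ d z w) ∧
      ∀ x y, d (Equiv.swap z p x) (Equiv.swap z p y) = d x y := by
  have hG := h.isTree.connected
  obtain ⟨p, hzp, hzp', hp⟩ :=
    exists_unique_adj_of_label_eq_zero h.isTree h.monotoneLabeling hz hyz
  refine ⟨p, hp, by simp [h.isLabelDist.dist_eq_max_of_adj hzp, hz],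
    fun w hwz => h.isLabelDist.label_le_dist_of_forall_adj_eq hG hz hzp hzp' hwz,
    h.isLabelDist.dist_swap_swap hG fun y hyz hyp =>
      h.isLabelDist.dist_eq_of_forall_adj_eq hG hz hzp' hyz hyp⟩

lemma exists_isDistIsometry_label_ne [Nontrivial V] :
    ∃ σ : V → V, IsDistIsometry d d σ ∧ ∃ z, l (σ z) ≠ l z := by
  classical
  obtain ⟨z, hz⟩ := exists_label_eq_zero h.isTree h.monotoneLabeling
  obtain ⟨y, hyz⟩ := exists_ne z
  obtain ⟨p, hp, -, -, hswap⟩ := h.exists_twin hz hyz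
  exact ⟨Equiv.swap z p, ⟨Equiv.bijective _, hswap⟩, z, by simp [hz, hp.ne']⟩

end IsLabeledTreeDist

section Isometry

variable {V₁ V₂ : Type*} {G₁ : SimpleGraph V₁} {G₂ : SimpleGraph V₂} {r₁ : V₁} {r₂ : V₂}
  {l₁ : V₁ → NNReal} {l₂ : V₂ → NNReal} {d₁ : V₁ → V₁ → NNReal} {d₂ : V₂ → V₂ → NNReal}
  {f : V₁ → V₂} {x : V₁}
variable (h₁ : IsLabeledTreeDist G₁ r₁ l₁ d₁) (h₂ : IsLabeledTreeDist G₂ r₂ l₂ d₂)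
  (hf : IsDistIsometry d₁ d₂ f)
include h₁ h₂ hf

theorem adj_iff_of_isDistIsometry (hl : ∀ x, l₂ (f x) = l₁ x) (u v : V₁) :
    G₁.Adj u v ↔ G₂.Adj (f u) (f v) := by
  have key : ∀ x y, IsMetricParent d₁ l₁ x y ↔ IsMetricParent d₂ l₂ (f x) (f y) := by
    intro x y
    simp only [IsMetricParent, hf.1.2.forall, hf.1.1.ne_iff, hf.2, hl]
  rw [h₁.adj_iff_isMetricParent, h₂.adj_iff_isMetricParent, key, key]

variable [Finite V₁] [Finite V₂]

lemma label_eq_of_isDistIsometry (hx : l₁ x ≠ 0) (hfx : l₂ (f x) ≠ 0) : l₂ (f x) = l₁ x := by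
  -- the label of an inner vertex is its least distance to another vertex
  obtain ⟨y, hyx, hy⟩ := h₁.exists_dist_eq_label hx
  obtain ⟨y', hy'x, hy'⟩ := h₂.exists_dist_eq_label hfx
  obtain ⟨w, rfl⟩ := hf.1.2 y'
  refine le_antisymm ?_ ?_
  · calc l₂ (f x) ≤ d₂ (f x) (f y) := h₂.label_le_dist (hf.1.1.ne hyx.symm)
      _ = l₁ x := by rw [hf.2, hy]
  · calc l₁ x ≤ d₁ x w := h₁.label_le_dist fun h => hy'x (h ▸ rfl)
      _ = l₂ (f x) := by rw [← hf.2, hy']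

lemma exists_label_ne_zero_of_label_ne (hx : l₂ (f x) ≠ l₁ x) :
    ∃ x', l₁ x' ≠ 0 ∧ l₂ (f x') = 0 := by
  classical
  by_cases hx₁ : l₁ x ≠ 0
  · exact ⟨x, hx₁, by_contra fun h => hx (label_eq_of_isDistIsometry h₁ h₂ hf hx₁ h)⟩
  -- `x` is a leaf sent to an inner vertex; were its parent `p` sent to an inner vertex too,
  -- `f x` and `f p` would be distinct inner vertices of the same label `l₁ p` at distance `l₁ p`
  rw [not_not] at hx₁
  have hfx : l₂ (f x) ≠ 0 := hx₁ ▸ hx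
  obtain ⟨y', hy'x, hy'⟩ := h₂.exists_dist_eq_label hfx
  obtain ⟨w, rfl⟩ := hf.1.2 y'
  have hwx : w ≠ x := fun h => hy'x (h ▸ rfl)
  obtain ⟨p, hp, hxp, hlow, -⟩ := h₁.exists_twin hx₁ hwx
  have hpx : p ≠ x := fun h => hp.ne' (h ▸ hx₁)
  refine ⟨p, hp.ne', by_contra fun hfp => ?_⟩
  have hfp : l₂ (f p) = l₁ p := label_eq_of_isDistIsometry h₁ h₂ hf hp.ne' hfp
  have hfx' : l₂ (f x) = l₁ p := le_antisymm
    (hxp ▸ hf.2 x p ▸ h₂.label_le_dist (hf.1.1.ne hpx.symm))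
    (hy' ▸ hf.2 x w ▸ hlow w hwx)
  exact (h₂.label_lt_of_dist_eq_label (hf.1.1.ne hpx.symm)
    (by rw [hf.2, hxp, hfx'])).ne (hfp.trans hfx'.symm)

lemma exists_isDistIsometry_ssubset (hx : l₁ x ≠ 0) (hfx : l₂ (f x) = 0) :
    ∃ g, IsDistIsometry d₁ d₂ g ∧ {v | l₂ (g v) ≠ l₁ v} ⊂ {v | l₂ (f v) ≠ l₁ v} := by
  classical
  obtain ⟨y, hyx, hy⟩ := h₁.exists_dist_eq_label hx
  obtain ⟨p, hp, hxw, hlow, hswap⟩ := h₂.exists_twin hfx (hf.1.1.ne hyx)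
  obtain ⟨w, rfl⟩ := hf.1.2 p
  have hwx : w ≠ x := fun h => hp.ne' (h ▸ hfx)
  have hfw : l₂ (f w) = l₁ x := le_antisymm (hy ▸ hf.2 x y ▸ hlow (f y) (hf.1.1.ne hyx))
    (hxw ▸ hf.2 x w ▸ h₁.label_le_dist hwx.symm)
  have hw : l₂ (f w) ≠ l₁ w := fun h => (h₁.label_lt_of_dist_eq_label hwx.symm
    (by rw [← hf.2, hxw, hfw])).ne (h.symm.trans hfw)
  refine ⟨Equiv.swap (f x) (f w) ∘ f, ⟨(Equiv.bijective _).comp hf.1, fun a b => ?_⟩, ?_⟩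
  · simp only [Function.comp_apply, hswap, hf.2]
  have hsub : {v | l₂ (Equiv.swap (f x) (f w) (f v)) ≠ l₁ v} ⊆ {v | l₂ (f v) ≠ l₁ v} := by
    intro v hv
    obtain rfl | hvx := eq_or_ne v x
    · simp [hfw] at hv
    obtain rfl | hvw := eq_or_ne v w
    · exact hw
    change l₂ _ ≠ _ at hv ⊢
    rwa [Equiv.swap_apply_of_ne_of_ne (hf.1.1.ne hvx) (hf.1.1.ne hvw)] at hv
  exact (Set.ssubset_iff_of_subset hsub).2 ⟨x, by simp [hfx, hx.symm], by simp [hfw]⟩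

theorem exists_isDistIsometry_label_eq :
    ∃ g, IsDistIsometry d₁ d₂ g ∧ ∀ x, l₂ (g x) = l₁ x := by
  classical
  -- an isometry with the fewest label mismatches has none
  have hex : ∃ n, ∃ g, IsDistIsometry d₁ d₂ g ∧ {v | l₂ (g v) ≠ l₁ v}.ncard = n := ⟨_, f, hf, rfl⟩
  obtain ⟨g, hg, hgn⟩ := Nat.find_spec hex
  refine ⟨g, hg, fun x => by_contra fun hx => ?_⟩
  obtain ⟨x', hx', hgx'⟩ := exists_label_ne_zero_of_label_ne h₁ h₂ hg hx
  obtain ⟨g', hg', hss⟩ := exists_isDistIsometry_ssubset h₁ h₂ hg hx' hgx'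
  exact Nat.find_min hex (hgn ▸ Set.ncard_lt_ncard hss (Set.toFinite _)) ⟨g', hg', rfl⟩

end Isometry

theorem stmt19_labeled_rooted_trees_iso_and_rigidity_general
    {V1 V2 : Type*} [Fintype V1] [Fintype V2]
    (G1 : SimpleGraph V1) (G2 : SimpleGraph V2)
    (hG1 : G1.IsTree) (hG2 : G2.IsTree)
    (r1 : V1) (r2 : V2) (l1 : V1 → NNReal) (l2 : V2 → NNReal)
    (h1b : ∀ u : V1, outDeg G1 r1 u = 0 ↔ l1 u = 0)
    (h1c : ∀ u v : V1, DirectSucc G1 r1 u v → l1 v < l1 u)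
    (h2b : ∀ u : V2, outDeg G2 r2 u = 0 ↔ l2 u = 0)
    (h2c : ∀ u v : V2, DirectSucc G2 r2 u v → l2 v < l2 u)
    (d1 : V1 → V1 → NNReal) (d2 : V2 → V2 → NNReal)
    (hd10 : ∀ u, d1 u u = 0)
    (hd1 : ∀ u v, u ≠ v → ∀ p : G1.Walk u v, p.IsPath →
      d1 u v = (p.support.map l1).foldr max 0)
    (hd20 : ∀ u, d2 u u = 0)
    (hd2 : ∀ u v, u ≠ v → ∀ p : G2.Walk u v, p.IsPath →
      d2 u v = (p.support.map l2).foldr max 0) :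
    ((∃ f : V1 ≃ V2, (∀ u v, G1.Adj u v ↔ G2.Adj (f u) (f v)) ∧
        ∀ v, l2 (f v) = l1 v) ↔
      (∃ f : V1 → V2, Function.Bijective f ∧ ∀ x y, d2 (f x) (f y) = d1 x y)) ∧
    ((∃ f : V1 → V2, Function.Bijective f ∧ ∀ x y, d2 (f x) (f y) = d1 x y) →
      ((Nat.card V1 = 1 ∧ Nat.card V2 = 1) ↔
        (∀ f : V1 → V2, Function.Bijective f →
          (∀ x y, d2 (f x) (f y) = d1 x y) →
          ((∀ u v, G1.Adj u v ↔ G2.Adj (f u) (f v)) ∧ ∀ v, l2 (f v) = l1 v)))) := by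
  have h₁ : IsLabeledTreeDist G1 r1 l1 d1 := ⟨hG1, ⟨fun v => (h1b v).symm, h1c⟩, ⟨hd10, hd1⟩⟩
  have h₂ : IsLabeledTreeDist G2 r2 l2 d2 := ⟨hG2, ⟨fun v => (h2b v).symm, h2c⟩, ⟨hd20, hd2⟩⟩
  refine ⟨⟨fun ⟨f, hadj, hl⟩ => ⟨f, f.bijective, ?_⟩, fun ⟨f, hf⟩ => ?_⟩, fun ⟨f₀, hf₀⟩ => ⟨?_, ?_⟩⟩
  · exact h₁.isLabelDist.dist_map h₂.isLabelDist hG1.connected ⟨f, (hadj _ _).symm⟩ hl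
  · obtain ⟨g, hg, hgl⟩ := exists_isDistIsometry_label_eq h₁ h₂ hf
    exact ⟨.ofBijective g hg.1, adj_iff_of_isDistIsometry h₁ h₂ hg hgl, hgl⟩
  · rintro ⟨hV1, hV2⟩ f - -
    have : Subsingleton V1 := Finite.card_le_one_iff_subsingleton.1 hV1.le
    have : Subsingleton V2 := Finite.card_le_one_iff_subsingleton.1 hV2.le
    exact ⟨fun u v => iff_of_false (fun h => h.ne (Subsingleton.elim u v))
      (fun h => h.ne (Subsingleton.elim _ _)), fun v => by rw [h₁.label_eq_zero, h₂.label_eq_zero]⟩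
  · intro hall
    by_contra hcard
    have : Nonempty V1 := hG1.nonempty
    have : Nontrivial V1 := Finite.one_lt_card_iff_nontrivial.1 <| by
      have := Nat.card_eq_of_bijective f₀ hf₀.1
      have := Nat.card_pos (α := V1)
      omega
    obtain ⟨σ, hσ, z, hz⟩ := h₁.exists_isDistIsometry_label_ne
    have hσl := (hall (f₀ ∘ σ) (hf₀.1.comp hσ.1) fun x y => (hf₀.2 _ _).trans (hσ.2 x y)).2 z
    exact hz (((hall f₀ hf₀.1 hf₀.2).2 (σ z)).symm.trans hσl)

/-- For labeled rooted trees `T₁(r₁, l₁)`, `T₂(r₂, l₂)` with `δ⁺(u) ≠ 1`,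
`δ⁺(u) = 0 ↔ lᵢ(u) = 0`, and labels strictly decreasing along direct successors:
(a) `T₁(l₁) ≃ T₂(l₂)` as labeled trees iff `(V(T₁), d_{l₁}) ≃ (V(T₂), d_{l₂})`;
(b) if the spaces are isometric, then `|V(T₁)| = |V(T₂)| = 1` iff every isometry is an
isomorphism of the labeled trees. -/
theorem stmt19_labeled_rooted_trees_iso_and_rigidity
    {V1 V2 : Type*} [Fintype V1] [Fintype V2]
    (G1 : SimpleGraph V1) (G2 : SimpleGraph V2)
    (hG1 : G1.IsTree) (hG2 : G2.IsTree)
    (r1 : V1) (r2 : V2) (l1 : V1 → NNReal) (l2 : V2 → NNReal)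
    (h1a : ∀ u : V1, outDeg G1 r1 u ≠ 1)
    (h1b : ∀ u : V1, outDeg G1 r1 u = 0 ↔ l1 u = 0)
    (h1c : ∀ u v : V1, DirectSucc G1 r1 u v → l1 v < l1 u)
    (h2a : ∀ u : V2, outDeg G2 r2 u ≠ 1)
    (h2b : ∀ u : V2, outDeg G2 r2 u = 0 ↔ l2 u = 0)
    (h2c : ∀ u v : V2, DirectSucc G2 r2 u v → l2 v < l2 u)
    (d1 : V1 → V1 → NNReal) (d2 : V2 → V2 → NNReal)
    (hd10 : ∀ u, d1 u u = 0)
    (hd1 : ∀ u v, u ≠ v → ∀ p : G1.Walk u v, p.IsPath →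
      d1 u v = (p.support.map l1).foldr max 0)
    (hd20 : ∀ u, d2 u u = 0)
    (hd2 : ∀ u v, u ≠ v → ∀ p : G2.Walk u v, p.IsPath →
      d2 u v = (p.support.map l2).foldr max 0) :
    ((∃ f : V1 ≃ V2, (∀ u v, G1.Adj u v ↔ G2.Adj (f u) (f v)) ∧
        ∀ v, l2 (f v) = l1 v) ↔
      (∃ f : V1 → V2, Function.Bijective f ∧ ∀ x y, d2 (f x) (f y) = d1 x y)) ∧
    ((∃ f : V1 → V2, Function.Bijective f ∧ ∀ x y, d2 (f x) (f y) = d1 x y) →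
      ((Nat.card V1 = 1 ∧ Nat.card V2 = 1) ↔
        (∀ f : V1 → V2, Function.Bijective f →
          (∀ x y, d2 (f x) (f y) = d1 x y) →
          ((∀ u v, G1.Adj u v ↔ G2.Adj (f u) (f v)) ∧ ∀ v, l2 (f v) = l1 v)))) :=
  stmt19_labeled_rooted_trees_iso_and_rigidity_general G1 G2 hG1 hG2 r1 r2 l1 l2 h1b h1c h2b h2c d1
    d2 hd10 hd1 hd20 hd2
end
end
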